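/- arXiv:2301.01519 — 5 statements merged into one kernel-verified Lean document; each statement's English description precedes it below -/
import Mathlib

section
/- Let α be an oriented partial permutation of {1,...,n} with dom(α) = {i_1 < i_2 < ... < i_k}, k ≥ 2. If d(i_1, i_k) = d(i_1α, i_kα) and d(i_p, i_{p+1}) = d(i_pα, i_{p+1}α) for all p = 1,...,k-1, then α is a partial isometry of the cycle graph, i.e. d(x α, y α) = d(x,y) for all x, y ∈ dom(α). -/
lemma key12 (n : ℤ) (hn : 3 ≤ n)
    (d : ℤ → ℤ → ℤ) (hd : ∀ x y, d x y = min |x - y| (n - |x - y|))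
    (k : ℕ) (hk : 3 ≤ k) (a b : ℕ → ℤ)
    (hamono : ∀ p q, p < q → q < k → a p < a q)
    (haR : ∀ p, p < k → 1 ≤ a p ∧ a p ≤ n)
    (hbR : ∀ p, p < k → 1 ≤ b p ∧ b p ≤ n)
    (hbinj : ∀ p q, p < k → q < k → b p = b q → p = q)
    (hcyc : ((Finset.range k).filter (fun p => b ((p + 1) % k) < b p)).card ≤ 1)
    (hends : d (a 0) (a (k - 1)) = d (b 0) (b (k - 1)))
    (hadj : ∀ p, p + 1 < k → d (a p) (a (p + 1)) = d (b p) (b (p + 1))) :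
    ∀ p q, p ≤ q → q < k → d (a p) (a q) = d (b p) (b q) := by
  have hk1 : k - 1 + 1 = k := by omega
  -- exactly one descent
  have hne : ((Finset.range k).filter (fun p => b ((p + 1) % k) < b p)).Nonempty := by
    rw [Finset.filter_nonempty_iff]
    by_contra h
    push_neg at h
    have step : ∀ j, j < k → b 0 + j ≤ b j := by
      intro j
      induction j with
      | zero => intro _; simp
      | succ i ih =>
        intro hik
        have hi : i < k := Nat.lt_of_succ_lt hik
        have h1 := h i (Finset.mem_range.mpr hi)
        rw [Nat.mod_eq_of_lt hik] at h1
        have hne' : b i ≠ b (i + 1) := fun he => by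
          have := hbinj i (i + 1) hi hik he; omega
        have h2 := ih hi
        have h3 : b i ≤ b (i + 1) := h1
        have h4 : ((i + 1 : ℕ) : ℤ) = (i : ℤ) + 1 := by push_cast; ring
        rw [h4]
        omega
    have h1 := h (k - 1) (Finset.mem_range.mpr (by omega))
    rw [hk1, Nat.mod_self] at h1
    have hne' : b (k - 1) ≠ b 0 := fun he => by
      have := hbinj (k - 1) 0 (by omega) (by omega) he; omega
    have h2 := step (k - 1) (by omega)
    have h3 : (1 : ℤ) ≤ ((k - 1 : ℕ) : ℤ) := by
      have : 1 ≤ k - 1 := by omega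
      exact_mod_cast this
    omega
  have hcard : ((Finset.range k).filter (fun p => b ((p + 1) % k) < b p)).card = 1 :=
    le_antisymm hcyc (Finset.card_pos.mpr hne)
  obtain ⟨m, hm⟩ := Finset.card_eq_one.mp hcard
  have hmk : m < k := by
    have : m ∈ Finset.range k := Finset.filter_subset _ _ (hm ▸ Finset.mem_singleton_self m)
    exact Finset.mem_range.mp this
  have hdesc : ∀ j, j < k → (b ((j + 1) % k) < b j ↔ j = m) := by
    intro j hj
    constructor
    · intro hlt
      have : j ∈ Finset.filter (fun p => b ((p + 1) % k) < b p) (Finset.range k) :=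
        Finset.mem_filter.mpr ⟨Finset.mem_range.mpr hj, hlt⟩
      rw [hm, Finset.mem_singleton] at this
      exact this
    · intro he
      have hmem : j ∈ Finset.filter (fun p => b ((p + 1) % k) < b p) (Finset.range k) := by
        rw [hm, Finset.mem_singleton]; exact he
      exact (Finset.mem_filter.mp hmem).2
  -- gaps
  set g : ℕ → ℤ := fun j => if j + 1 < k then a (j + 1) - a j else n - (a (k - 1) - a 0) with hgdef
  set c : ℕ → ℤ := fun j => b ((j + 1) % k) - b j + (if j = m then n else 0) with hcdef
  have hsucc_ne : ∀ j, j < k → (j + 1) % k ≠ j := by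
    intro j hj he
    rcases Nat.lt_or_ge (j + 1) k with h | h
    · rw [Nat.mod_eq_of_lt h] at he; omega
    · have h2 : j + 1 = k := by omega
      rw [h2, Nat.mod_self] at he; omega
  have hgb : ∀ j, j < k → 1 ≤ g j ∧ g j ≤ n - 1 := by
    intro j hj
    simp only [hgdef]
    split_ifs with h
    · have h1 := hamono j (j + 1) (by omega) h
      have h2 := haR j hj
      have h3 := haR (j + 1) h
      omega
    · have h1 := hamono 0 (k - 1) (by omega) (by omega)
      have h2 := haR 0 (by omega)
      have h3 := haR (k - 1) (by omega)
      omega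
  have hcb : ∀ j, j < k → 1 ≤ c j ∧ c j ≤ n - 1 := by
    intro j hj
    have hj1 : (j + 1) % k < k := Nat.mod_lt _ (by omega)
    have h2 := hbR j hj
    have h3 := hbR ((j + 1) % k) hj1
    have hne' : b ((j + 1) % k) ≠ b j := fun he => hsucc_ne j hj (hbinj _ _ hj1 hj he)
    simp only [hcdef]
    split_ifs with h
    · have hlt := (hdesc j hj).mpr h
      omega
    · have hge : ¬ b ((j + 1) % k) < b j := fun hlt => h ((hdesc j hj).mp hlt)
      omega
  -- sums
  have hsum_g : ∑ j ∈ Finset.range k, g j = n := by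
    rw [← hk1, Finset.sum_range_succ]
    have h1 : ∑ j ∈ Finset.range (k - 1), g j = a (k - 1) - a 0 := by
      rw [← Finset.sum_range_sub (fun i => a i)]
      apply Finset.sum_congr rfl
      intro j hj
      rw [Finset.mem_range] at hj
      simp only [hgdef]
      rw [if_pos (by omega)]
    rw [h1]
    simp only [hgdef]
    rw [if_neg (by omega)]
    ring
  have hsum_c : ∑ j ∈ Finset.range k, c j = n := by
    have hsplit := Finset.sum_range_succ (fun j => c j) (k - 1)
    rw [hk1] at hsplit
    rw [hsplit]
    have h2 : ∑ j ∈ Finset.range (k - 1), c j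
        = ∑ j ∈ Finset.range (k - 1), (b (j + 1) - b j + (if j = m then n else 0)) := by
      apply Finset.sum_congr rfl
      intro j hj
      rw [Finset.mem_range] at hj
      simp only [hcdef]
      rw [Nat.mod_eq_of_lt (by omega)]
    rw [h2, Finset.sum_add_distrib, Finset.sum_range_sub (fun i => b i)]
    have hck : c (k - 1) = b 0 - b (k - 1) + (if k - 1 = m then n else 0) := by
      simp only [hcdef]
      rw [hk1, Nat.mod_self]
    rw [hck]
    by_cases hmk1 : m = k - 1
    · have hz : ∑ j ∈ Finset.range (k - 1), (if j = m then n else 0) = 0 := by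
        apply Finset.sum_eq_zero
        intro j hj
        rw [Finset.mem_range] at hj
        rw [if_neg (by omega)]
      rw [hz, if_pos hmk1.symm]; ring
    · have hz : ∑ j ∈ Finset.range (k - 1), (if j = m then n else 0) = n := by
        rw [Finset.sum_ite_eq' (Finset.range (k - 1)) m (fun _ => n),
          if_pos (Finset.mem_range.mpr (by omega))]
      rw [hz, if_neg (fun h => hmk1 h.symm)]; ring
  -- telescoping
  have htel_a : ∀ p q, p ≤ q → q < k → a q - a p = ∑ j ∈ Finset.Ico p q, g j := by
    intro p q hpq
    induction q, hpq using Nat.le_induction with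
    | base => intro _; simp
    | succ q hq ih =>
      intro hq1
      rw [Finset.sum_Ico_succ_top hq, ← ih (by omega)]
      simp only [hgdef]
      rw [if_pos hq1]
      ring
  have htel_b : ∀ p q, p ≤ q → q < k →
      b q - b p = ∑ j ∈ Finset.Ico p q, c j - (if m ∈ Finset.Ico p q then n else 0) := by
    intro p q hpq
    induction q, hpq using Nat.le_induction with
    | base => intro _; simp
    | succ q hq ih =>
      intro hq1
      rw [Finset.sum_Ico_succ_top hq]
      have ihq := ih (by omega)
      have hcq : c q = b (q + 1) - b q + (if q = m then n else 0) := by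
        simp only [hcdef]
        rw [Nat.mod_eq_of_lt hq1]
      rw [hcq]
      have hmem : (m ∈ Finset.Ico p (q + 1)) ↔ (m ∈ Finset.Ico p q ∨ m = q) := by
        simp [Finset.mem_Ico]; omega
      by_cases hmq : m = q
      · have hnm : m ∉ Finset.Ico p q := by simp [Finset.mem_Ico]; omega
        rw [if_neg hnm] at ihq
        rw [if_pos (hmem.mpr (Or.inr hmq)), if_pos hmq.symm]
        omega
      · rw [if_neg (fun h => hmq h.symm)]
        by_cases hm1 : m ∈ Finset.Ico p q
        · rw [if_pos hm1] at ihq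
          rw [if_pos (hmem.mpr (Or.inl hm1))]
          omega
        · rw [if_neg hm1] at ihq
          rw [if_neg (by rw [hmem]; tauto)]
          omega
  -- per-gap equality
  have hmin : ∀ j, j < k → min (g j) (n - g j) = min (c j) (n - c j) := by
    intro j hj
    rcases Nat.lt_or_ge (j + 1) k with h | h
    · have hadj' := hadj j h
      rw [hd, hd] at hadj'
      have hga : a (j + 1) - a j = g j := by simp only [hgdef]; rw [if_pos h]
      have h1 : |a j - a (j + 1)| = g j := by
        rw [abs_sub_comm, hga]
        exact abs_of_pos (by have := hgb j hj; omega)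
      rw [h1] at hadj'
      have hcval : b ((j + 1) % k) - b j = c j - (if j = m then n else 0) := by
        simp only [hcdef]; omega
      rw [Nat.mod_eq_of_lt h] at hcval
      have hcj := hcb j hj
      by_cases hjm : j = m
      · rw [if_pos hjm] at hcval
        have h2 : |b j - b (j + 1)| = n - c j := by
          rw [abs_of_pos] <;> omega
        rw [h2] at hadj'
        rw [hadj', min_comm]
        congr 1
        ring
      · rw [if_neg hjm] at hcval
        have h2 : |b j - b (j + 1)| = c j := by
          rw [abs_of_neg] <;> omega
        rw [h2] at hadj'
        exact hadj'
    · have hjk : j = k - 1 := by omega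
      subst hjk
      rw [hd, hd] at hends
      have hga : g (k - 1) = n - (a (k - 1) - a 0) := by
        simp only [hgdef]; rw [if_neg (by omega)]
      have h1 : |a 0 - a (k - 1)| = n - g (k - 1) := by
        rw [hga, abs_of_neg]
        · ring
        · have := hamono 0 (k - 1) (by omega) (by omega); omega
      rw [h1] at hends
      have hcval : b ((k - 1 + 1) % k) - b (k - 1) = c (k - 1) - (if k - 1 = m then n else 0) := by
        simp only [hcdef]; omega
      rw [hk1, Nat.mod_self] at hcval
      have hcj := hcb (k - 1) (by omega)
      have key : |b 0 - b (k - 1)| = c (k - 1) ∨ |b 0 - b (k - 1)| = n - c (k - 1) := by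
        by_cases hjm : k - 1 = m
        · rw [if_pos hjm] at hcval
          right
          rw [abs_of_nonpos (by omega)]
          omega
        · rw [if_neg hjm] at hcval
          left
          have hnd : ¬ b ((k - 1 + 1) % k) < b (k - 1) :=
            fun hlt => hjm ((hdesc (k - 1) (by omega)).mp hlt)
          rw [hk1, Nat.mod_self] at hnd
          rw [abs_of_nonneg (by omega)]
          omega
      have e1 : min (n - g (k - 1)) (n - (n - g (k - 1))) = min (g (k - 1)) (n - g (k - 1)) := by
        rw [min_comm]; congr 1; ring
      have e2 : min (n - c (k - 1)) (n - (n - c (k - 1))) = min (c (k - 1)) (n - c (k - 1)) := by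
        rw [min_comm]; congr 1; ring
      rcases key with h2 | h2
      · rw [h2] at hends
        rw [← e1, hends]
      · rw [h2] at hends
        rw [← e1, hends, e2]
  -- c = g everywhere
  have hcg : ∀ j, j < k → c j = g j := by
    have hor : ∀ j, j < k → c j = g j ∨ (c j = n - g j ∧ 2 * g j ≠ n) := by
      intro j hj
      have h1 := hmin j hj
      have h2 := hgb j hj
      have h3 := hcb j hj
      rw [min_def, min_def] at h1
      split_ifs at h1 <;> omega
    set F := Finset.filter (fun j => c j ≠ g j) (Finset.range k) with hF
    have hFsub : F ⊆ Finset.range k := Finset.filter_subset _ _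
    have hFcard_le : F.card ≤ k := by
      have := Finset.card_le_card hFsub
      simpa using this
    have hsum0 : ∑ j ∈ F, (c j - g j) = 0 := by
      have hsplit : ∑ j ∈ Finset.range k \ F, (c j - g j) + ∑ j ∈ F, (c j - g j)
          = ∑ j ∈ Finset.range k, (c j - g j) := Finset.sum_sdiff hFsub
      have hz : ∑ j ∈ Finset.range k \ F, (c j - g j) = 0 := by
        apply Finset.sum_eq_zero
        intro j hj
        rw [Finset.mem_sdiff] at hj
        by_contra hne'
        exact hj.2 (Finset.mem_filter.mpr ⟨hj.1, by omega⟩)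
      have htot : ∑ j ∈ Finset.range k, (c j - g j) = 0 := by
        rw [Finset.sum_sub_distrib, hsum_g, hsum_c]; ring
      rw [hz] at hsplit
      omega
    have hFval : ∀ j ∈ F, c j - g j = n - 2 * g j := by
      intro j hj
      rw [hF, Finset.mem_filter, Finset.mem_range] at hj
      rcases hor j hj.1 with h | h
      · exact absurd h hj.2
      · omega
    have hsum1 : (F.card : ℤ) * n - 2 * ∑ j ∈ F, g j = 0 := by
      rw [← hsum0, Finset.sum_congr rfl hFval, Finset.sum_sub_distrib, Finset.sum_const,
        nsmul_eq_mul, ← Finset.mul_sum]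
    have hcompl : ∑ j ∈ Finset.range k \ F, g j + ∑ j ∈ F, g j = n := by
      rw [Finset.sum_sdiff hFsub, hsum_g]
    have hcardcompl : (Finset.range k \ F).card = k - F.card := by
      rw [Finset.card_sdiff_of_subset hFsub, Finset.card_range]
    have hcompl_ge : ((Finset.range k \ F).card : ℤ) ≤ ∑ j ∈ Finset.range k \ F, g j := by
      calc ((Finset.range k \ F).card : ℤ) = ∑ j ∈ Finset.range k \ F, (1 : ℤ) := by simp
        _ ≤ _ := by
            apply Finset.sum_le_sum
            intro j hj
            exact (hgb j (Finset.mem_range.mp (Finset.mem_sdiff.mp hj).1)).1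
    have hSF_le : ∑ j ∈ F, g j ≤ n - (k : ℤ) + F.card := by
      have hc2 : ((Finset.range k \ F).card : ℤ) = (k : ℤ) - F.card := by
        rw [hcardcompl]
        push_cast [Nat.cast_sub hFcard_le]
        ring
      rw [hc2] at hcompl_ge
      omega
    have hcF : F.card ≤ 1 := by
      by_contra hc
      push_neg at hc
      have hX2 : (2 : ℤ) ≤ (F.card : ℤ) := by exact_mod_cast hc
      nlinarith [mul_nonneg (show (0:ℤ) ≤ (F.card : ℤ) - 2 by omega)
        (show (0:ℤ) ≤ n - 2 by omega)]
    intro j hj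
    by_contra hcgj
    have hjF : j ∈ F := Finset.mem_filter.mpr ⟨Finset.mem_range.mpr hj, hcgj⟩
    have hF1 : F.card = 1 := le_antisymm hcF (Finset.card_pos.mpr ⟨j, hjF⟩)
    obtain ⟨j₀, hj₀⟩ := Finset.card_eq_one.mp hF1
    have hjj : j = j₀ := by
      have := hj₀ ▸ hjF
      exact Finset.mem_singleton.mp this
    subst hjj
    rw [hj₀, Finset.sum_singleton] at hsum0
    exact hcgj (by omega)
  -- final assembly
  intro p q hpq hq
  rw [hd, hd]
  have hG := htel_a p q hpq hq
  have hB := htel_b p q hpq hq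
  have hSeq : ∑ j ∈ Finset.Ico p q, c j = ∑ j ∈ Finset.Ico p q, g j := by
    apply Finset.sum_congr rfl
    intro j hj
    rw [Finset.mem_Ico] at hj
    exact hcg j (by omega)
  rw [hSeq] at hB
  set S := ∑ j ∈ Finset.Ico p q, g j with hS
  have hS0 : 0 ≤ S := by
    apply Finset.sum_nonneg
    intro j hj
    rw [Finset.mem_Ico] at hj
    have := hgb j (by omega)
    omega
  have hSn : S ≤ n := by
    rw [← hsum_g]
    apply Finset.sum_le_sum_of_subset_of_nonneg
    · intro j hj
      rw [Finset.mem_Ico] at hj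
      rw [Finset.mem_range]
      omega
    · intro j hj _
      rw [Finset.mem_range] at hj
      have := hgb j hj
      omega
  have h1 : |a p - a q| = S := by
    rw [abs_sub_comm, hG]
    exact abs_of_nonneg hS0
  rw [h1]
  by_cases hmI : m ∈ Finset.Ico p q
  · rw [if_pos hmI] at hB
    have h2 : |b p - b q| = n - S := by
      rw [abs_sub_comm, abs_of_nonpos (by omega)]
      omega
    rw [h2]
    have e : n - (n - S) = S := by ring
    rw [e, min_comm]
  · rw [if_neg hmI] at hB
    have h2 : |b p - b q| = S := by
      rw [abs_sub_comm, abs_of_nonneg (by omega)]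
      omega
    rw [h2]

theorem stmt12 (n : ℤ) (hn : 3 ≤ n)
    (d : ℤ → ℤ → ℤ) (hd : ∀ x y, d x y = min |x - y| (n - |x - y|))
    (k : ℕ) (hk : 2 ≤ k) (a b : ℕ → ℤ)
    (hamono : ∀ p q, p < q → q < k → a p < a q)
    (haR : ∀ p, p < k → 1 ≤ a p ∧ a p ≤ n)
    (hbR : ∀ p, p < k → 1 ≤ b p ∧ b p ≤ n)
    (hbinj : ∀ p q, p < k → q < k → b p = b q → p = q)
    (horient :
      ((Finset.range k).filter (fun p => b ((p + 1) % k) < b p)).card ≤ 1 ∨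
      ((Finset.range k).filter (fun p => b p < b ((p + 1) % k))).card ≤ 1)
    (hends : d (a 0) (a (k - 1)) = d (b 0) (b (k - 1)))
    (hadj : ∀ p, p + 1 < k → d (a p) (a (p + 1)) = d (b p) (b (p + 1))) :
    ∀ p q, p < k → q < k → d (a p) (a q) = d (b p) (b q) := by
  have hdsymm : ∀ x y, d x y = d y x := by
    intro x y
    rw [hd, hd, abs_sub_comm]
  have hrefl : ∀ x y, d x x = d y y := by
    intro x y
    rw [hd, hd]
    simp
  -- reduce to ordered pairs
  suffices hle : ∀ p q, p ≤ q → q < k → d (a p) (a q) = d (b p) (b q) by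
    intro p q hp hq
    rcases le_total p q with h | h
    · exact hle p q h hq
    · rw [hdsymm (a p) (a q), hdsymm (b p) (b q)]
      exact hle q p h hp
  rcases Nat.lt_or_ge k 3 with hk2 | hk3
  · -- k = 2
    have hk2' : k = 2 := by omega
    subst hk2'
    intro p q hpq hq
    interval_cases q
    · interval_cases p
      exact hrefl (a 0) (b 0)
    · interval_cases p
      · simpa using hends
      · exact hrefl (a 1) (b 1)
  · -- k ≥ 3
    rcases horient with hcyc | hanti
    · exact key12 n hn d hd k hk3 a b hamono haR hbR hbinj hcyc hends hadj
    · set b' : ℕ → ℤ := fun j => n + 1 - b j with hb'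
      have hdb' : ∀ x y, d (b' x) (b' y) = d (b x) (b y) := by
        intro x y
        rw [hd, hd]
        have h1 : b' x - b' y = b y - b x := by simp only [hb']; ring
        rw [h1, abs_sub_comm]
      have hbR' : ∀ p, p < k → 1 ≤ b' p ∧ b' p ≤ n := by
        intro p hp
        have := hbR p hp
        simp only [hb']
        omega
      have hbinj' : ∀ p q, p < k → q < k → b' p = b' q → p = q := by
        intro p q hp hq he
        apply hbinj p q hp hq
        simp only [hb'] at he
        omega
      have hcyc' : ((Finset.range k).filter (fun p => b' ((p + 1) % k) < b' p)).card ≤ 1 := by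
        have he : (Finset.range k).filter (fun p => b' ((p + 1) % k) < b' p)
            = (Finset.range k).filter (fun p => b p < b ((p + 1) % k)) := by
          apply Finset.filter_congr
          intro x _
          simp only [hb']
          constructor <;> intro h <;> omega
        rw [he]
        exact hanti
      have hends' : d (a 0) (a (k - 1)) = d (b' 0) (b' (k - 1)) := by
        rw [hdb']; exact hends
      have hadj' : ∀ p, p + 1 < k → d (a p) (a (p + 1)) = d (b' p) (b' (p + 1)) := by
        intro p hp
        rw [hdb']; exact hadj p hp
      intro p q hpq hq
      rw [← hdb' p q]
      exact key12 n hn d hd k hk3 a b' hamono haR hbR' hbinj' hcyc' hends' hadj' p q hpq hq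
end

section
/- Let A = {i_1 < ... < i_k} and B = {j_1 < ... < j_k} be k-element subsets of {1,...,n} with k ≥ 2. The unique order-preserving bijection δ from A to B (sending i_p to j_p) is a partial isometry of the cycle distance d if and only if d(i_p, i_{p+1}) = d(j_p, j_{p+1}) for all p = 1,...,k-1 and d(i_1, i_k) = d(j_1, j_k). -/
theorem stmt13 (n : ℤ) (hn : 3 ≤ n)
    (d : ℤ → ℤ → ℤ) (hd : ∀ x y, d x y = min |x - y| (n - |x - y|))
    (k : ℕ) (hk : 2 ≤ k) (a b : ℕ → ℤ)
    (hamono : ∀ p q, p < q → q < k → a p < a q)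
    (hbmono : ∀ p q, p < q → q < k → b p < b q)
    (haR : ∀ p, p < k → 1 ≤ a p ∧ a p ≤ n)
    (hbR : ∀ p, p < k → 1 ≤ b p ∧ b p ≤ n) :
    (∀ p q, p < k → q < k → d (b p) (b q) = d (a p) (a q)) ↔
      ((∀ p, p + 1 < k → d (a p) (a (p + 1)) = d (b p) (b (p + 1))) ∧
        d (a 0) (a (k - 1)) = d (b 0) (b (k - 1))) := by
  have habs : ∀ x y : ℤ, x ≤ y → |x - y| = y - x := fun x y h => by
    rw [abs_sub_comm, abs_of_nonneg (by linarith)]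
  constructor
  · intro h
    exact ⟨fun p hp => (h p (p + 1) (by omega) hp).symm,
      (h 0 (k - 1) (by omega) (by omega)).symm⟩
  · rintro ⟨h1, h2⟩
    have main : ∀ p q, p ≤ q → q < k →
        (b q - b p = a q - a p ∨ (b q - b p) + (a q - a p) = n) := by
      rcases eq_or_lt_of_le hk with hk2 | hk3
      · -- k = 2
        intro p q hpq hq
        have hcase : p = q ∨ (p = 0 ∧ q = 1) := by omega
        rcases hcase with rfl | ⟨rfl, rfl⟩
        · left; ring
        · have hA := hamono 0 1 (by omega) (by omega)
          have hB := hbmono 0 1 (by omega) (by omega)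
          have hA0 := haR 0 (by omega)
          have hA1 := haR 1 (by omega)
          have hB0 := hbR 0 (by omega)
          have hB1 := hbR 1 (by omega)
          have hEq := h1 0 (by omega)
          rw [hd, hd, habs _ _ hA.le, habs _ _ hB.le] at hEq
          omega
      · -- k ≥ 3
        obtain ⟨m, rfl⟩ : ∃ m, k = m + 1 := ⟨k - 1, by omega⟩
        have hm : 2 ≤ m := by omega
        set ga : ℕ → ℤ := fun i => a (i + 1) - a i with hga
        set gb : ℕ → ℤ := fun i => b (i + 1) - b i with hgb
        have hga1 : ∀ i, i < m → 1 ≤ ga i := fun i hi => by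
          have := hamono i (i + 1) (by omega) (by omega); simp [hga]; omega
        have hgb1 : ∀ i, i < m → 1 ≤ gb i := fun i hi => by
          have := hbmono i (i + 1) (by omega) (by omega); simp [hgb]; omega
        have hSa : ∑ i ∈ Finset.range m, ga i = a m - a 0 :=
          Finset.sum_range_sub a m
        have hSb : ∑ i ∈ Finset.range m, gb i = b m - b 0 :=
          Finset.sum_range_sub b m
        have hSaU : a m - a 0 ≤ n - 1 := by
          have := haR 0 (by omega); have := haR m (by omega); omega
        have hSbU : b m - b 0 ≤ n - 1 := by
          have := hbR 0 (by omega); have := hbR m (by omega); omega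
        -- each gap: equal or flipped
        have hflip : ∀ i, i < m → ga i = gb i ∨ ga i + gb i = n := by
          intro i hi
          have hEq := h1 i (by omega)
          have hA := hamono i (i + 1) (by omega) (by omega)
          have hB := hbmono i (i + 1) (by omega) (by omega)
          have hAi := haR i (by omega); have hAi1 := haR (i + 1) (by omega)
          have hBi := hbR i (by omega); have hBi1 := hbR (i + 1) (by omega)
          rw [hd, hd, habs _ _ hA.le, habs _ _ hB.le] at hEq
          simp only [hga, hgb]
          omega
        -- wrap condition
        have hwrap : a m - a 0 = b m - b 0 ∨ (a m - a 0) + (b m - b 0) = n := by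
          have hEq := h2
          have hA := hamono 0 m (by omega) (by omega)
          have hB := hbmono 0 m (by omega) (by omega)
          have hA0 := haR 0 (by omega); have hAm := haR m (by omega)
          have hB0 := hbR 0 (by omega); have hBm := hbR m (by omega)
          simp only [Nat.add_sub_cancel] at hEq
          rw [hd, hd, habs _ _ hA.le, habs _ _ hB.le] at hEq
          omega
        -- the key claim: all gaps equal
        have gap : ∀ i, i < m → ga i = gb i := by
          intro i hi
          by_contra hne
          have hflipi : ga i + gb i = n := (hflip i hi).resolve_left hne
          have hiM : i ∈ Finset.range m := Finset.mem_range.mpr hi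
          have ea : ∑ j ∈ (Finset.range m).erase i, ga j + ga i
              = a m - a 0 := by rw [Finset.sum_erase_add _ _ hiM, hSa]
          have eb : ∑ j ∈ (Finset.range m).erase i, gb j + gb i
              = b m - b 0 := by rw [Finset.sum_erase_add _ _ hiM, hSb]
          have cardE : ((Finset.range m).erase i).card = m - 1 := by
            rw [Finset.card_erase_of_mem hiM, Finset.card_range]
          have lba : ((m - 1 : ℕ) : ℤ) ≤ ∑ j ∈ (Finset.range m).erase i, ga j := by
            have := Finset.card_nsmul_le_sum ((Finset.range m).erase i) ga 1
              (fun j hj => hga1 j (by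
                have := Finset.mem_of_mem_erase hj; simpa using this))
            rwa [cardE, nsmul_eq_mul, mul_one] at this
          have lbb : ((m - 1 : ℕ) : ℤ) ≤ ∑ j ∈ (Finset.range m).erase i, gb j := by
            have := Finset.card_nsmul_le_sum ((Finset.range m).erase i) gb 1
              (fun j hj => hgb1 j (by
                have := Finset.mem_of_mem_erase hj; simpa using this))
            rwa [cardE, nsmul_eq_mul, mul_one] at this
          rcases hwrap with hw | hw
          · -- sums equal
            by_cases hall : ∀ j, j < m → j ≠ i → ga j = gb j
            · have : ∑ j ∈ (Finset.range m).erase i, ga j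
                  = ∑ j ∈ (Finset.range m).erase i, gb j := by
                apply Finset.sum_congr rfl
                intro j hj
                exact hall j (by simpa using Finset.mem_of_mem_erase hj)
                  (Finset.ne_of_mem_erase hj)
              omega
            · push_neg at hall
              obtain ⟨j, hjm, hji, hnej⟩ := hall
              have hflipj : ga j + gb j = n := (hflip j hjm).resolve_left hnej
              have hjE : j ∈ (Finset.range m).erase i :=
                Finset.mem_erase.mpr ⟨hji, Finset.mem_range.mpr hjm⟩
              -- sum over erase i erase j
              have ea2 : ∑ l ∈ ((Finset.range m).erase i).erase j, ga l + ga j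
                  = ∑ j ∈ (Finset.range m).erase i, ga j := by
                rw [Finset.sum_erase_add _ _ hjE]
              have eb2 : ∑ l ∈ ((Finset.range m).erase i).erase j, gb l + gb j
                  = ∑ j ∈ (Finset.range m).erase i, gb j := by
                rw [Finset.sum_erase_add _ _ hjE]
              have cardE2 : (((Finset.range m).erase i).erase j).card = m - 2 := by
                rw [Finset.card_erase_of_mem hjE, cardE]; omega
              have lba2 : ((m - 2 : ℕ) : ℤ) ≤ ∑ l ∈ ((Finset.range m).erase i).erase j, ga l := by
                have := Finset.card_nsmul_le_sum (((Finset.range m).erase i).erase j) ga 1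
                  (fun l hl => hga1 l (by
                    have := Finset.mem_of_mem_erase (Finset.mem_of_mem_erase hl)
                    simpa using this))
                rwa [cardE2, nsmul_eq_mul, mul_one] at this
              have lbb2 : ((m - 2 : ℕ) : ℤ) ≤ ∑ l ∈ ((Finset.range m).erase i).erase j, gb l := by
                have := Finset.card_nsmul_le_sum (((Finset.range m).erase i).erase j) gb 1
                  (fun l hl => hgb1 l (by
                    have := Finset.mem_of_mem_erase (Finset.mem_of_mem_erase hl)
                    simpa using this))
                rwa [cardE2, nsmul_eq_mul, mul_one] at this
              omega
          · -- sums complementary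
            omega
        -- telescoping: differences equal
        intro p q hpq hq
        left
        obtain ⟨r, rfl⟩ : ∃ r, q = p + r := ⟨q - p, by omega⟩
        clear hpq
        induction r with
        | zero => simp
        | succ r ih =>
          have hq' : p + r < m + 1 := by omega
          have := gap (p + r) (by omega)
          simp only [hga, hgb] at this
          have ihh := ih (by omega)
          have hrw : p + (r + 1) = (p + r) + 1 := by omega
          rw [hrw]
          omega
    -- conclude
    intro p q hp hq
    rcases le_total p q with h | h
    · have hble : b p ≤ b q := by
        rcases eq_or_lt_of_le h with rfl | h'
        exacts [le_refl _, (hbmono p q h' hq).le]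
      have hale : a p ≤ a q := by
        rcases eq_or_lt_of_le h with rfl | h'
        exacts [le_refl _, (hamono p q h' hq).le]
      have hBp := hbR p (by omega); have hBq := hbR q (by omega)
      have hAp := haR p (by omega); have hAq := haR q (by omega)
      rw [hd, hd, habs _ _ hble, habs _ _ hale]
      rcases main p q h hq with he | he <;> omega
    · have hble : b q ≤ b p := by
        rcases eq_or_lt_of_le h with rfl | h'
        exacts [le_refl _, (hbmono q p h' hp).le]
      have hale : a q ≤ a p := by
        rcases eq_or_lt_of_le h with rfl | h'
        exacts [le_refl _, (hamono q p h' hp).le]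
      have hBp := hbR p (by omega); have hBq := hbR q (by omega)
      have hAp := haR p (by omega); have hAq := haR q (by omega)
      rw [hd, hd, abs_sub_comm (b p), abs_sub_comm (a p), habs _ _ hble, habs _ _ hale]
      rcases main q p h hp with he | he <;> omega
end

section
/- The number of order-preserving partial isometries of the cycle graph C_n equals 3·2^n + (n+1)n(n-1)/6 - ((1+(-1)^n)/8)·n² - 2n - 2. -/
/-- The cycle-graph distance on `{1,…,n}`. -/
def cycDist (n x y : ℕ) : ℕ :=
  min (max x y - min x y) (n - (max x y - min x y))

/-- `α : ℕ → Option ℕ` (with `α x = some u` meaning `xα = u`) is a partial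
isometry of the cycle graph `C_n`: an injective partial map on `{1,…,n}`
preserving the cycle distance. -/
def IsPartialIsometry (n : ℕ) (α : ℕ → Option ℕ) : Prop :=
  (∀ x u, α x = some u → 1 ≤ x ∧ x ≤ n ∧ 1 ≤ u ∧ u ≤ n) ∧
  (∀ x y u, α x = some u → α y = some u → x = y) ∧
  (∀ x y u v, α x = some u → α y = some v → cycDist n u v = cycDist n x y)

/-- `α` is order-preserving. -/
def IsOrderPres (α : ℕ → Option ℕ) : Prop :=
  ∀ x y u v, α x = some u → α y = some v → x ≤ y → u ≤ v

/-!
Any three points in the domain of an order-preserving partial isometry of `C_n` force the two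
gaps between them to be preserved exactly, not merely up to `g ↦ n - g`. Hence either every
displacement `xα - x` is the same `t`, and `α` is the translation by `t` restricted to a subset of
the window `{x | x, x + t ∈ [1, n]}` of `n - |t|` points, or `α` is a two-point map
`x ↦ u, x + a ↦ u + (n - a)` with `2a ≠ n`. The translations contribute
`1 + ∑_{|t| ≤ n} (2^(n - |t|) - 1) = 3·2^n - 2n - 2` maps, the twisted pairs
`∑_{2a ≠ n} a(n - a) = C(n+1, 3) - [n even] n²/4`.
-/

open Finset

lemma cycDist_of_le {n x y : ℕ} (h : x ≤ y) : cycDist n x y = min (y - x) (n - (y - x)) := by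
  simp [cycDist, max_eq_right h, min_eq_left h]

lemma cycDist_comm (n x y : ℕ) : cycDist n x y = cycDist n y x := by
  simp only [cycDist]; omega

lemma cycDist_eq_of_add_eq {n a b c d : ℕ} (h : a + d = b + c) : cycDist n a b = cycDist n c d := by
  simp only [cycDist]; omega

lemma cycDist_eq_cycDist_iff {n x y u v : ℕ} (hxy : x ≤ y) (hy : y ≤ n) (huv : u ≤ v)
    (hv : v ≤ n) : cycDist n u v = cycDist n x y ↔ v - u = y - x ∨ v - u = n - (y - x) := by
  rw [cycDist_of_le huv, cycDist_of_le hxy]; omega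

lemma sub_eq_sub_of_cycDist_eq {n x y z u v w : ℕ} (hx : 1 ≤ x) (hxy : x < y) (hyz : y < z)
    (hz : z ≤ n) (huv : u < v) (hvw : v < w) (hw : w ≤ n)
    (h₁ : cycDist n u v = cycDist n x y) (h₂ : cycDist n v w = cycDist n y z)
    (h₃ : cycDist n u w = cycDist n x z) : v - u = y - x ∧ w - v = z - y := by
  rw [cycDist_of_le huv.le, cycDist_of_le hxy.le] at h₁
  rw [cycDist_of_le hvw.le, cycDist_of_le hyz.le] at h₂
  rw [cycDist_of_le (huv.trans hvw).le, cycDist_of_le (hxy.trans hyz).le] at h₃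
  omega

def translateOn (t : ℤ) (D : Finset ℕ) : ℕ → Option ℕ :=
  fun z => if z ∈ D then some (z + t).toNat else none

def twoPointMap (x y u v : ℕ) : ℕ → Option ℕ :=
  fun z => if z = x then some u else if z = y then some v else none

def window (n : ℕ) (t : ℤ) : Finset ℕ :=
  (Icc 1 n).filter fun z => 1 ≤ (z : ℤ) + t ∧ (z : ℤ) + t ≤ n

lemma translateOn_eq_some {t : ℤ} {D : Finset ℕ} {z w : ℕ} :
    translateOn t D z = some w ↔ z ∈ D ∧ w = (z + t).toNat := by
  unfold translateOn; split_ifs <;> simp_all [eq_comm]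

lemma twoPointMap_eq_some {x y u v z w : ℕ} :
    twoPointMap x y u v z = some w ↔ z = x ∧ w = u ∨ z ≠ x ∧ z = y ∧ w = v := by
  unfold twoPointMap; split_ifs <;> simp_all [eq_comm]

lemma mem_window {n z : ℕ} {t : ℤ} :
    z ∈ window n t ↔ 1 ≤ z ∧ z ≤ n ∧ 1 ≤ (z : ℤ) + t ∧ (z : ℤ) + t ≤ n := by
  simp only [window, mem_filter, mem_Icc, and_assoc]

lemma card_window (n : ℕ) (t : ℤ) : #(window n t) = n - t.natAbs := by
  have : window n t = Icc ((1 - t).toNat ⊔ 1) ((n - t).toNat ⊓ n) := by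
    ext z; simp only [mem_window, mem_Icc]; omega
  rw [this, Nat.card_Icc]; omega

lemma twoPointMap_inj {x y u v x' y' u' v' : ℕ} (hxy : x < y) (hxy' : x' < y')
    (h : twoPointMap x y u v = twoPointMap x' y' u' v') : x = x' ∧ y = y' ∧ u = u' ∧ v = v' := by
  have hx : twoPointMap x' y' u' v' x = some u := by rw [← h]; simp [twoPointMap]
  have hy : twoPointMap x' y' u' v' y = some v := by rw [← h]; simp [twoPointMap, hxy.ne']
  have hx' : twoPointMap x y u v x' = some u' := by rw [h]; simp [twoPointMap]
  have hy' : twoPointMap x y u v y' = some v' := by rw [h]; simp [twoPointMap, hxy'.ne']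
  rcases twoPointMap_eq_some.1 hx with ⟨_, _⟩ | ⟨_, _, _⟩ <;>
    rcases twoPointMap_eq_some.1 hy with ⟨_, _⟩ | ⟨_, _, _⟩ <;>
    rcases twoPointMap_eq_some.1 hx' with ⟨_, _⟩ | ⟨_, _, _⟩ <;>
    rcases twoPointMap_eq_some.1 hy' with ⟨_, _⟩ | ⟨_, _, _⟩ <;> omega

section

variable {n : ℕ}

lemma isPartialIsometry_translateOn {t : ℤ} {D : Finset ℕ} (hD : D ⊆ window n t) :
    IsPartialIsometry n (translateOn t D) := by
  refine ⟨fun x u hx => ?_, fun x y u hx hy => ?_, fun x y u v hx hy => ?_⟩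
  · obtain ⟨hxD, rfl⟩ := translateOn_eq_some.1 hx
    have := mem_window.1 (hD hxD); omega
  · obtain ⟨hxD, rfl⟩ := translateOn_eq_some.1 hx
    obtain ⟨hyD, hxy⟩ := translateOn_eq_some.1 hy
    have := mem_window.1 (hD hxD); have := mem_window.1 (hD hyD); omega
  · obtain ⟨hxD, rfl⟩ := translateOn_eq_some.1 hx
    obtain ⟨hyD, rfl⟩ := translateOn_eq_some.1 hy
    have := mem_window.1 (hD hxD); have := mem_window.1 (hD hyD)
    exact cycDist_eq_of_add_eq (by omega)

lemma isOrderPres_translateOn {t : ℤ} {D : Finset ℕ} (hD : D ⊆ window n t) :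
    IsOrderPres (translateOn t D) := by
  intro x y u v hx hy hxy
  obtain ⟨hxD, rfl⟩ := translateOn_eq_some.1 hx
  obtain ⟨hyD, rfl⟩ := translateOn_eq_some.1 hy
  have := mem_window.1 (hD hxD); have := mem_window.1 (hD hyD); omega

lemma isPartialIsometry_twoPointMap {x y u v : ℕ} (hx : 1 ≤ x) (hxy : x < y) (hy : y ≤ n)
    (hu : 1 ≤ u) (huv : u < v) (hv : v ≤ n) (hd : cycDist n u v = cycDist n x y) :
    IsPartialIsometry n (twoPointMap x y u v) := by
  refine ⟨fun a c ha => ?_, fun a b c ha hb => ?_, fun a b c d ha hb => ?_⟩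
  · rcases twoPointMap_eq_some.1 ha with ⟨rfl, rfl⟩ | ⟨-, rfl, rfl⟩ <;> omega
  · rcases twoPointMap_eq_some.1 ha with ⟨rfl, rfl⟩ | ⟨-, rfl, rfl⟩ <;>
      rcases twoPointMap_eq_some.1 hb with ⟨rfl, _⟩ | ⟨-, rfl, _⟩ <;> omega
  · rcases twoPointMap_eq_some.1 ha with ⟨rfl, rfl⟩ | ⟨-, rfl, rfl⟩ <;>
      rcases twoPointMap_eq_some.1 hb with ⟨rfl, rfl⟩ | ⟨-, rfl, rfl⟩
    · exact cycDist_eq_of_add_eq rfl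
    · exact hd
    · rw [cycDist_comm, hd, cycDist_comm]
    · exact cycDist_eq_of_add_eq rfl

lemma isOrderPres_twoPointMap {x y u v : ℕ} (hxy : x < y) (huv : u ≤ v) :
    IsOrderPres (twoPointMap x y u v) := by
  intro a b c d ha hb hab
  rcases twoPointMap_eq_some.1 ha with ⟨rfl, rfl⟩ | ⟨-, rfl, rfl⟩ <;>
    rcases twoPointMap_eq_some.1 hb with ⟨rfl, rfl⟩ | ⟨-, rfl, rfl⟩ <;> omega

end

namespace IsPartialIsometry

variable {n : ℕ} {α : ℕ → Option ℕ} {p q r u v w : ℕ}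

lemma lt_of_lt (hα : IsPartialIsometry n α) (hord : IsOrderPres α) (hp : α p = some u)
    (hq : α q = some v) (hpq : p < q) : u < v :=
  (hord p q u v hp hq hpq.le).lt_of_ne fun huv => hpq.ne (hα.2.1 p q u hp (huv ▸ hq))

lemma sub_eq_sub_of_third (hα : IsPartialIsometry n α) (hord : IsOrderPres α)
    (hp : α p = some u) (hq : α q = some v) (hr : α r = some w) (hpq : p < q) (hrp : r ≠ p)
    (hrq : r ≠ q) : v - u = q - p := by
  have := hα.1 p u hp; have := hα.1 q v hq; have := hα.1 r w hr
  have hd := hα.2.2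
  rcases lt_or_gt_of_ne hrp with hrp | hpr
  · exact (sub_eq_sub_of_cycDist_eq (by omega) hrp hpq (by omega)
      (hα.lt_of_lt hord hr hp hrp) (hα.lt_of_lt hord hp hq hpq) (by omega)
      (hd _ _ _ _ hr hp) (hd _ _ _ _ hp hq) (hd _ _ _ _ hr hq)).2
  rcases lt_or_gt_of_ne hrq with hrq | hqr
  · have := sub_eq_sub_of_cycDist_eq (by omega) hpr hrq (by omega)
      (hα.lt_of_lt hord hp hr hpr) (hα.lt_of_lt hord hr hq hrq) (by omega)
      (hd _ _ _ _ hp hr) (hd _ _ _ _ hr hq) (hd _ _ _ _ hp hq)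
    have := hα.lt_of_lt hord hp hr hpr; have := hα.lt_of_lt hord hr hq hrq
    omega
  · exact (sub_eq_sub_of_cycDist_eq (by omega) hpq hqr (by omega)
      (hα.lt_of_lt hord hp hq hpq) (hα.lt_of_lt hord hq hr hqr) (by omega)
      (hd _ _ _ _ hp hq) (hd _ _ _ _ hq hr) (hd _ _ _ _ hp hr)).1

lemma eq_twoPointMap (hα : IsPartialIsometry n α) (hord : IsOrderPres α) (hp : α p = some u)
    (hq : α q = some v) (hpq : p < q) (hne : v - u ≠ q - p) : α = twoPointMap p q u v := by
  funext z
  by_cases hzp : z = p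
  · simp [twoPointMap, hzp, hp]
  by_cases hzq : z = q
  · simp [twoPointMap, hzq, hpq.ne', hq]
  simp only [twoPointMap, if_neg hzp, if_neg hzq, Option.eq_none_iff_forall_ne_some]
  exact fun w hz => hne (hα.sub_eq_sub_of_third hord hp hq hz hpq hzp hzq)

lemma eq_translateOn (hα : IsPartialIsometry n α)
    (hdisp : ∀ p q u v, α p = some u → α q = some v → (u : ℤ) - p = v - q) (hp : α p = some u) :
    ∃ D, D ⊆ window n (u - p) ∧ α = translateOn (u - p) D := by
  set D := (Icc 1 n).filter fun z => (α z).isSome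
  refine ⟨D, ?_⟩
  have hmem : ∀ z w, α z = some w → z ∈ D ∧ (w : ℤ) = z + (u - p) := by
    intro z w hz
    have := hα.1 z w hz; have := hdisp p z u w hp hz
    exact ⟨by simp [D, hz]; omega, by omega⟩
  refine ⟨fun z hz => ?_, funext fun z => ?_⟩
  · obtain ⟨w, hw⟩ := Option.isSome_iff_exists.1 (mem_filter.1 hz).2
    have := hα.1 z w hw; have := (hmem z w hw).2
    exact mem_window.2 (by omega)
  · cases hz : α z with
    | none => simp [translateOn, D, hz]
    | some w =>
      obtain ⟨hzD, hw⟩ := hmem z w hz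
      simp only [translateOn, if_pos hzD, Option.some.injEq]
      omega

end IsPartialIsometry

noncomputable def shiftParams (n : ℕ) : Finset ((_ : ℤ) × Finset ℕ) :=
  (Icc (-(n : ℤ)) n).sigma fun t => (window n t).powerset.erase ∅

/-- `⟨a, x, u⟩` encodes the map `x ↦ u, x + a ↦ u + (n - a)`, whose domain and image gaps are
complementary on the cycle. -/
def twistParams (n : ℕ) : Finset ((_ : ℕ) × ℕ × ℕ) :=
  ((range (n + 1)).filter fun a => 2 * a ≠ n).sigma fun a => Icc 1 (n - a) ×ˢ Icc 1 a

def twistedPair (n : ℕ) (p : (_ : ℕ) × ℕ × ℕ) : ℕ → Option ℕ :=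
  twoPointMap p.2.1 (p.2.1 + p.1) p.2.2 (p.2.2 + (n - p.1))

abbrev translations (n : ℕ) : Set (ℕ → Option ℕ) :=
  (fun p : (_ : ℤ) × Finset ℕ => translateOn p.1 p.2) '' ↑(shiftParams n)

abbrev twistedPairs (n : ℕ) : Set (ℕ → Option ℕ) :=
  twistedPair n '' ↑(twistParams n)

lemma mem_shiftParams {n : ℕ} {t : ℤ} {D : Finset ℕ} :
    ⟨t, D⟩ ∈ shiftParams n ↔ (-(n : ℤ) ≤ t ∧ t ≤ n) ∧ D ≠ ∅ ∧ D ⊆ window n t := by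
  simp only [shiftParams, mem_sigma, mem_Icc, mem_erase, mem_powerset]

lemma mem_twistParams {n a x u : ℕ} :
    ⟨a, x, u⟩ ∈ twistParams n ↔ (a < n + 1 ∧ 2 * a ≠ n) ∧ (1 ≤ x ∧ x ≤ n - a) ∧ 1 ≤ u ∧ u ≤ a := by
  simp only [twistParams, mem_sigma, mem_filter, mem_range, mem_product, mem_Icc]

namespace IsPartialIsometry

variable {n : ℕ} {α : ℕ → Option ℕ} {p q u v : ℕ}

lemma mem_translations (hα : IsPartialIsometry n α)
    (hdisp : ∀ p q u v, α p = some u → α q = some v → (u : ℤ) - p = v - q) (hp : α p = some u) :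
    α ∈ translations n := by
  obtain ⟨D, hD, rfl⟩ := hα.eq_translateOn hdisp hp
  have hpD := (translateOn_eq_some.1 hp).1
  have := mem_window.1 (hD hpD)
  exact ⟨⟨u - p, D⟩, mem_shiftParams.2 ⟨by omega, nonempty_iff_ne_empty.1 ⟨p, hpD⟩, hD⟩, rfl⟩

lemma mem_twistedPairs (hα : IsPartialIsometry n α) (hord : IsOrderPres α) (hp : α p = some u)
    (hq : α q = some v) (hpq : p < q) (hne : v - u ≠ q - p) : α ∈ twistedPairs n := by
  have := hα.1 p u hp; have := hα.1 q v hq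
  have huv := hα.lt_of_lt hord hp hq hpq
  have hgap := ((cycDist_eq_cycDist_iff hpq.le (by omega) huv.le (by omega)).1
    (hα.2.2 p q u v hp hq)).resolve_left hne
  refine ⟨⟨q - p, p, u⟩, mem_twistParams.2 (by omega), ?_⟩
  rw [hα.eq_twoPointMap hord hp hq hpq hne, twistedPair,
    show p + (q - p) = q by omega, show u + (n - (q - p)) = v by omega]

end IsPartialIsometry

lemma isPartialIsometry_and_isOrderPres_of_mem_translations {n : ℕ} {α : ℕ → Option ℕ}
    (h : α ∈ translations n) : IsPartialIsometry n α ∧ IsOrderPres α := by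
  obtain ⟨⟨t, D⟩, hmem, rfl⟩ := h
  have hD := (mem_shiftParams.1 hmem).2.2
  exact ⟨isPartialIsometry_translateOn hD, isOrderPres_translateOn hD⟩

lemma isPartialIsometry_and_isOrderPres_of_mem_twistedPairs {n : ℕ} {α : ℕ → Option ℕ}
    (h : α ∈ twistedPairs n) : IsPartialIsometry n α ∧ IsOrderPres α := by
  obtain ⟨⟨a, x, u⟩, hmem, rfl⟩ := h
  have := mem_twistParams.1 hmem
  have hd : cycDist n u (u + (n - a)) = cycDist n x (x + a) :=
    (cycDist_eq_cycDist_iff (by omega) (by omega) (by omega) (by omega)).2 (Or.inr (by omega))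
  dsimp only [twistedPair]
  exact ⟨isPartialIsometry_twoPointMap (by omega) (by omega) (by omega) (by omega) (by omega)
    (by omega) hd, isOrderPres_twoPointMap (by omega) (by omega)⟩

lemma setOf_isPartialIsometry_and_isOrderPres (n : ℕ) :
    {α | IsPartialIsometry n α ∧ IsOrderPres α} =
      insert (fun _ => none) (translations n ∪ twistedPairs n) := by
  ext α
  constructor
  · rintro ⟨hα, hord⟩
    by_cases hdisp : ∀ p q u v, α p = some u → α q = some v → (u : ℤ) - p = v - q
    · by_cases hnone : α = fun _ => none
      · exact Or.inl hnone
      obtain ⟨z, hz⟩ := Function.ne_iff.1 hnone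
      obtain ⟨w, hz⟩ := Option.ne_none_iff_exists'.1 hz
      exact Or.inr (Or.inl (hα.mem_translations hdisp hz))
    · simp only [not_forall] at hdisp
      obtain ⟨p, q, u, v, hp, hq, hne⟩ := hdisp
      refine Or.inr (Or.inr ?_)
      rcases lt_trichotomy p q with hpq | rfl | hqp
      · have := hα.lt_of_lt hord hp hq hpq
        exact hα.mem_twistedPairs hord hp hq hpq (by omega)
      · cases hp.symm.trans hq
        exact absurd rfl hne
      · have := hα.lt_of_lt hord hq hp hqp
        exact hα.mem_twistedPairs hord hq hp hqp (by omega)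
  · rintro (rfl | h | h)
    · have hempty : (fun _ => none : ℕ → Option ℕ) = translateOn 0 ∅ := by
        funext z; simp [translateOn]
      rw [hempty]
      exact ⟨isPartialIsometry_translateOn (empty_subset (window n 0)),
        isOrderPres_translateOn (empty_subset (window n 0))⟩
    · exact isPartialIsometry_and_isOrderPres_of_mem_translations h
    · exact isPartialIsometry_and_isOrderPres_of_mem_twistedPairs h

lemma injOn_translateOn (n : ℕ) :
    Set.InjOn (fun p : (_ : ℤ) × Finset ℕ => translateOn p.1 p.2) ↑(shiftParams n) := by
  rintro ⟨t, D⟩ hp ⟨t', D'⟩ hp' h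
  replace hp := mem_shiftParams.1 hp
  replace hp' := mem_shiftParams.1 hp'
  dsimp only at h
  obtain rfl : D = D' := by
    ext z
    have hz := congrFun h z
    simp only [translateOn] at hz
    split_ifs at hz <;> simp_all
  obtain ⟨z, hz⟩ := nonempty_iff_ne_empty.2 hp.2.1
  have := mem_window.1 (hp.2.2 hz); have := mem_window.1 (hp'.2.2 hz)
  have htt := congrFun h z
  simp only [translateOn, if_pos hz, Option.some.injEq] at htt
  obtain rfl : t = t' := by omega
  rfl

lemma injOn_twistedPair (n : ℕ) : Set.InjOn (twistedPair n) ↑(twistParams n) := by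
  rintro ⟨a, x, u⟩ hp ⟨a', x', u'⟩ hp' h
  replace hp := mem_twistParams.1 hp
  replace hp' := mem_twistParams.1 hp'
  dsimp only [twistedPair] at h
  obtain ⟨rfl, ha, rfl, -⟩ := twoPointMap_inj (by omega) (by omega) h
  obtain rfl : a = a' := by omega
  rfl

lemma disjoint_translations_twistedPairs (n : ℕ) : Disjoint (translations n) (twistedPairs n) := by
  rw [Set.disjoint_left]
  rintro _ ⟨⟨t, D⟩, -, rfl⟩ ⟨⟨a, x, u⟩, hmem, h⟩
  have := mem_twistParams.1 hmem
  dsimp only [twistedPair] at h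
  have hx : translateOn t D x = some u := by
    rw [← h]; exact twoPointMap_eq_some.2 (Or.inl ⟨rfl, rfl⟩)
  have hy : translateOn t D (x + a) = some (u + (n - a)) := by
    rw [← h]; exact twoPointMap_eq_some.2 (Or.inr ⟨by omega, rfl, rfl⟩)
  have := (translateOn_eq_some.1 hx).2; have := (translateOn_eq_some.1 hy).2
  omega

lemma none_notMem_translations_union_twistedPairs (n : ℕ) :
    (fun _ => none) ∉ translations n ∪ twistedPairs n := by
  rintro (⟨⟨t, D⟩, hmem, h⟩ | ⟨⟨a, x, u⟩, -, h⟩)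
  · obtain ⟨z, hz⟩ := nonempty_iff_ne_empty.2 (mem_shiftParams.1 hmem).2.1
    simpa [translateOn, hz] using congrFun h z
  · simpa [twistedPair, twoPointMap] using congrFun h x

lemma sum_range_sub_mul (n : ℕ) : ∑ a ∈ range (n + 1), (n - a) * a = (n + 1).choose 3 := by
  induction n with
  | zero => rfl
  | succ n ih =>
    have hsplit : ∑ a ∈ range (n + 1), (n + 1 - a) * a
        = ∑ a ∈ range (n + 1), (n - a) * a + ∑ a ∈ range (n + 1), a := by
      rw [← sum_add_distrib]
      refine sum_congr rfl fun a ha => ?_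
      rw [mem_range] at ha
      rw [show n + 1 - a = n - a + 1 by omega, add_one_mul]
    rw [sum_range_succ, Nat.sub_self, zero_mul, add_zero, hsplit, ih, sum_range_id,
      ← Nat.choose_two_right, Nat.choose_succ_succ' (n + 1) 2, add_comm]

lemma choose_three_succ (n : ℕ) : ((n + 1).choose 3 : ℤ) = (n + 1) * n * (n - 1) / 6 := by
  rcases n with _ | n
  · rfl
  have h : (n : ℤ) * (n + 1) * (n + 2) = 6 * (n + 2).choose 3 := by
    exact_mod_cast (by simpa [Nat.descFactorial, Nat.factorial, mul_assoc] using
      Nat.descFactorial_eq_factorial_mul_choose (n + 2) 3)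
  exact (Int.ediv_eq_of_eq_mul_left (by norm_num) (by push_cast; linear_combination h)).symm

lemma sum_Icc_two_pow_sub_natAbs (n : ℕ) :
    ∑ t ∈ Icc (-(n : ℤ)) n, 2 ^ (n - t.natAbs) + 2 = 3 * 2 ^ n := by
  induction n with
  | zero => simp
  | succ n ih =>
    have hIcc : Icc (-((n + 1 : ℕ) : ℤ)) (n + 1 : ℕ)
        = insert (-((n + 1 : ℕ) : ℤ)) (insert ((n + 1 : ℕ) : ℤ) (Icc (-(n : ℤ)) n)) := by
      ext t; simp only [mem_Icc, mem_insert]; omega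
    have hstep : ∑ t ∈ Icc (-(n : ℤ)) n, 2 ^ (n + 1 - t.natAbs)
        = 2 * ∑ t ∈ Icc (-(n : ℤ)) n, 2 ^ (n - t.natAbs) := by
      rw [mul_sum]
      refine sum_congr rfl fun t ht => ?_
      rw [mem_Icc] at ht
      rw [show n + 1 - t.natAbs = n - t.natAbs + 1 by omega, pow_succ, mul_comm]
    rw [hIcc, sum_insert (by simp; omega), sum_insert (by simp), hstep]
    simp only [Int.natAbs_neg, Int.natAbs_natCast, Nat.sub_self, pow_zero]
    rw [pow_succ]; omega

lemma sum_filter_two_mul_eq (n : ℕ) :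
    ((∑ a ∈ (range (n + 1)).filter (fun a => 2 * a = n), (n - a) * a : ℕ) : ℤ)
      = (1 + (-1) ^ n) * (n : ℤ) ^ 2 / 8 := by
  rcases Nat.even_or_odd' n with ⟨k, rfl | rfl⟩
  · have hfilter : (range (2 * k + 1)).filter (fun a => 2 * a = 2 * k) = {k} := by
      ext a; simp only [mem_filter, mem_range, mem_singleton]; omega
    rw [hfilter, sum_singleton, Even.neg_one_pow ⟨k, by ring⟩, show 2 * k - k = k by omega,
      show (1 + 1) * ((2 * k : ℕ) : ℤ) ^ 2 = 8 * (k * k) by push_cast; ring,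
      Int.mul_ediv_cancel_left _ (by norm_num)]
    push_cast; rfl
  · have hfilter : (range (2 * k + 1 + 1)).filter (fun a => 2 * a = 2 * k + 1) = ∅ := by
      ext a; simp only [mem_filter, mem_range, notMem_empty, iff_false]; omega
    rw [hfilter, sum_empty, Odd.neg_one_pow ⟨k, rfl⟩]
    simp

lemma card_shiftParams (n : ℕ) : (#(shiftParams n) : ℤ) = 3 * 2 ^ n - 2 * n - 3 := by
  rw [shiftParams, card_sigma]
  simp only [card_erase_of_mem (empty_mem_powerset _), card_powerset, card_window]
  have hsum : ∑ t ∈ Icc (-(n : ℤ)) n, (2 ^ (n - t.natAbs) - 1) + #(Icc (-(n : ℤ)) n)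
      = ∑ t ∈ Icc (-(n : ℤ)) n, 2 ^ (n - t.natAbs) := by
    rw [card_eq_sum_ones, ← sum_add_distrib]
    exact sum_congr rfl fun t _ => Nat.sub_add_cancel Nat.one_le_two_pow
  have hcard : #(Icc (-(n : ℤ)) n) = 2 * n + 1 := by simp; omega
  have := sum_Icc_two_pow_sub_natAbs n
  have : ((2 ^ n : ℕ) : ℤ) = 2 ^ n := Nat.cast_pow 2 n
  omega

lemma card_twistParams (n : ℕ) :
    (#(twistParams n) : ℤ) = (n + 1) * n * (n - 1) / 6 - (1 + (-1) ^ n) * (n : ℤ) ^ 2 / 8 := by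
  rw [twistParams, card_sigma]
  simp only [card_product, Nat.card_Icc, add_tsub_cancel_right]
  have h := sum_filter_not_add_sum_filter (range (n + 1)) (fun a => 2 * a = n)
    (fun a => (n - a) * a)
  rw [sum_range_sub_mul] at h
  rw [← choose_three_succ, ← sum_filter_two_mul_eq, ← h]
  push_cast
  ring

theorem stmt15_general (n : ℕ) :
    (({α : ℕ → Option ℕ | IsPartialIsometry n α ∧ IsOrderPres α}.ncard : ℤ)) =
      3 * 2 ^ n + ((n : ℤ) + 1) * n * (n - 1) / 6 -
        (1 + (-1) ^ n) * (n : ℤ) ^ 2 / 8 - 2 * n - 2 := by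
  rw [setOf_isPartialIsometry_and_isOrderPres,
    Set.ncard_insert_of_notMem (none_notMem_translations_union_twistedPairs n),
    Set.ncard_union_eq (disjoint_translations_twistedPairs n), translations, twistedPairs,
    (injOn_translateOn n).ncard_image, (injOn_twistedPair n).ncard_image,
    Set.ncard_coe_finset, Set.ncard_coe_finset]
  push_cast
  rw [card_shiftParams, card_twistParams]
  ring

theorem stmt15 (n : ℕ) (hn : 3 ≤ n) :
    (({α : ℕ → Option ℕ | IsPartialIsometry n α ∧ IsOrderPres α}.ncard : ℤ)) =
      3 * 2 ^ n + ((n : ℤ) + 1) * n * (n - 1) / 6 -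
        (1 + (-1) ^ n) * (n : ℤ) ^ 2 / 8 - 2 * n - 2 :=
  stmt15_general n
end

section
/- The number of orientation-preserving partial isometries of the cycle graph C_n equals n·2^n + n²(n-1)/2 - ((1+(-1)^n)/4)·n² - n + 1. -/
/-- `α` is orientation-preserving: for any strictly increasing enumeration
`a 0 < a 1 < ⋯ < a (t-1)` of its domain, the sequence of images has at most
one cyclic descent. -/
def IsOrientPres (α : ℕ → Option ℕ) : Prop :=
  ∀ (t : ℕ) (a : ℕ → ℕ),
    (∀ p q, p < q → q < t → a p < a q) →
    (∀ p, p < t → α (a p) ≠ none) →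
    (∀ x, α x ≠ none → ∃ p, p < t ∧ a p = x) →
    ((Finset.range t).filter
      (fun p => (α (a ((p + 1) % t))).getD 0 < (α (a p)).getD 0)).card ≤ 1

/-!
Read the points `1, …, n` of `C_n` in `ZMod n`. Equal cycle distances force equal differences
up to sign, and as soon as one pair in the domain has a difference that is not `2`-torsion, the
same sign works for all pairs; so a partial isometry is the restriction of a rotation
`x ↦ x + c` or of a reflection `x ↦ k - x`. Restricted rotations are orientation-preserving,
whereas a reflection restricted to three or more points has at least two cyclic descents.
Hence the maps are the empty one, the `n (2 ^ n - 1)` rotations restricted to nonempty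
domains, and the `n` reflections restricted to each of the `n (n - 1) / 2` pairs of points,
except the `n / 2` antipodal pairs (for even `n`), on which reflections agree with rotations.
-/

open Finset

-- Modulo `n`, `cycRot n c` is `x ↦ x + c` and `cycRefl n s` is `x ↦ s + 2 - x`.
def cycRot (n c x : ℕ) : ℕ := if x + c ≤ n then x + c else x + c - n

def cycRefl (n s x : ℕ) : ℕ := if x ≤ s + 1 then s + 2 - x else s + 2 + n - x

def IsCycSymmetry (n : ℕ) (f : ℕ → ℕ) : Prop :=
  ∀ x ∈ Icc 1 n, ∀ y ∈ Icc 1 n,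
    f x ∈ Icc 1 n ∧ (f x = f y → x = y) ∧ cycDist n (f x) (f y) = cycDist n x y

section Symmetries

variable {n c c' s s' x y : ℕ}

theorem isCycSymmetry_cycRot (hc : c < n) : IsCycSymmetry n (cycRot n c) := by
  intro x hx y hy
  simp only [mem_Icc] at *
  unfold cycRot cycDist
  refine ⟨?_, ?_, ?_⟩ <;> split_ifs <;> omega

theorem isCycSymmetry_cycRefl (hs : s < n) : IsCycSymmetry n (cycRefl n s) := by
  intro x hx y hy
  simp only [mem_Icc] at *
  unfold cycRefl cycDist
  refine ⟨?_, ?_, ?_⟩ <;> split_ifs <;> omega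

theorem eq_of_cycRot_eq (hc : c < n) (hc' : c' < n) (h : cycRot n c x = cycRot n c' x) :
    c = c' := by
  unfold cycRot at h; split_ifs at h <;> omega

theorem eq_of_cycRefl_eq (hs : s < n) (hs' : s' < n) (hx : x ∈ Icc 1 n)
    (h : cycRefl n s x = cycRefl n s' x) : s = s' := by
  rw [mem_Icc] at hx; unfold cycRefl at h; split_ifs at h <;> omega

theorem two_mul_sub_eq_of_cycRot_eq_cycRefl (hs : s < n) (hx : 1 ≤ x)
    (hxy : x < y) (hy : y ≤ n) (hx' : cycRot n c x = cycRefl n s x)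
    (hy' : cycRot n c y = cycRefl n s y) : 2 * (y - x) = n := by
  unfold cycRot cycRefl at hx' hy'; split_ifs at hx' hy' <;> omega

theorem natCast_cycRot : ((cycRot n c x : ℕ) : ZMod n) = x + c := by
  unfold cycRot; split
  · push_cast; ring
  · rw [Nat.cast_sub (by omega)]; push_cast [ZMod.natCast_self]; ring

theorem natCast_cycRefl (hx : x ≤ n) : ((cycRefl n s x : ℕ) : ZMod n) = s + 2 - x := by
  unfold cycRefl; split
  · rw [Nat.cast_sub (by omega)]; push_cast; ring
  · rw [Nat.cast_sub (by omega)]; push_cast [ZMod.natCast_self]; ring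

end Symmetries

theorem ZMod.natCast_injOn_Icc (n : ℕ) : Set.InjOn (Nat.cast : ℕ → ZMod n) ↑(Icc 1 n) := by
  intro x hx y hy h
  simp only [coe_Icc, Set.mem_Icc] at hx hy
  have h' : ((x - 1 : ℕ) : ZMod n) = ((y - 1 : ℕ) : ZMod n) := by
    rw [Nat.cast_sub hx.1, Nat.cast_sub hy.1, h]
  have := congrArg ZMod.val h'
  rw [ZMod.val_cast_of_lt (by omega), ZMod.val_cast_of_lt (by omega)] at this
  omega

theorem natCast_sub_eq_or_of_cycDist_eq {n x y u v : ℕ} (hx : x ∈ Icc 1 n)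
    (hy : y ∈ Icc 1 n) (hu : u ∈ Icc 1 n) (hv : v ∈ Icc 1 n)
    (h : cycDist n u v = cycDist n x y) :
    (v : ZMod n) - u = y - x ∨ (v : ZMod n) - u = x - y := by
  simp only [mem_Icc] at hx hy hu hv
  -- the distance from `a` forwards to `b` along the cycle
  have hcast : ∀ a b : ℕ, a ≤ n → b ≤ n →
      (((if a ≤ b then b - a else b + n - a) : ℕ) : ZMod n) = (b : ZMod n) - a := by
    intro a b ha hb; split
    · rw [Nat.cast_sub (by omega)]
    · rw [Nat.cast_sub (by omega)]; push_cast [ZMod.natCast_self]; ring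
  have hfwd : ((if u ≤ v then v - u else v + n - u) = (if x ≤ y then y - x else y + n - x)) ∨
      ((if u ≤ v then v - u else v + n - u) + (if x ≤ y then y - x else y + n - x) = n) := by
    unfold cycDist at h; split_ifs <;> omega
  rcases hfwd with hfwd | hfwd
  · left; rw [← hcast u v hu.2 hv.2, ← hcast x y hx.2 hy.2, hfwd]
  · right
    have hsum := congrArg (Nat.cast : ℕ → ZMod n) hfwd
    simp only [Nat.cast_add, ZMod.natCast_self] at hsum
    rw [hcast u v hu.2 hv.2, hcast x y hx.2 hy.2] at hsum
    linear_combination hsum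

theorem eq_add_or_eq_sub_of_sub_eq_or {R ι : Type*} [CommRing R] {D : Set ι} {g h : ι → R}
    (hgh : ∀ x ∈ D, ∀ y ∈ D, g y - g x = h y - h x ∨ g y - g x = h x - h y)
    {x y : ι} (hx : x ∈ D) (hy : y ∈ D) (h2 : 2 * (h y - h x) ≠ 0) :
    (∀ z ∈ D, g z = g x + (h z - h x)) ∨ (∀ z ∈ D, g z = g x - (h z - h x)) := by
  -- if `y` and `z` have opposite signs relative to `x`, then `2 * (h z - h x) = 0`, so that
  -- both signs fit `z`, or `2 * (h y - h x) = 0`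
  rcases hgh x hx y hy with hxy | hxy
  · left; intro z hz
    rcases hgh x hx z hz with hxz | hxz
    · linear_combination hxz
    · rcases hgh y hy z hz with hyz | hyz
      · have h0 : 2 * (h z - h x) = 0 := by linear_combination hxz - hyz - hxy
        linear_combination hxz - h0
      · exact absurd (by linear_combination hxz - hyz - hxy) h2
  · right; intro z hz
    rcases hgh x hx z hz with hxz | hxz
    · rcases hgh y hy z hz with hyz | hyz
      · exact absurd (by linear_combination hyz + hxy - hxz) h2
      · have h0 : 2 * (h z - h x) = 0 := by linear_combination hyz + hxy - hxz
        linear_combination hxz + h0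
    · linear_combination hxz

section Rigidity

variable {n : ℕ} {D : Finset ℕ} {g : ℕ → ℕ}

theorem exists_cycRot_of_natCast_eq [NeZero n] (hD : D ⊆ Icc 1 n)
    (hg : ∀ z ∈ D, g z ∈ Icc 1 n) (K : ZMod n) (hK : ∀ z ∈ D, (g z : ZMod n) = z + K) :
    ∃ c < n, ∀ z ∈ D, g z = cycRot n c z := by
  refine ⟨K.val, K.val_lt, fun z hz => ZMod.natCast_injOn_Icc n (hg z hz)
    ((isCycSymmetry_cycRot K.val_lt) z (hD hz) z (hD hz)).1 ?_⟩
  rw [hK z hz, natCast_cycRot, ZMod.natCast_zmod_val]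

theorem exists_cycRefl_of_natCast_eq [NeZero n] (hD : D ⊆ Icc 1 n)
    (hg : ∀ z ∈ D, g z ∈ Icc 1 n) (K : ZMod n) (hK : ∀ z ∈ D, (g z : ZMod n) = K - z) :
    ∃ s < n, ∀ z ∈ D, g z = cycRefl n s z := by
  refine ⟨(K - 2).val, (K - 2).val_lt, fun z hz => ZMod.natCast_injOn_Icc n (hg z hz)
    ((isCycSymmetry_cycRefl (K - 2).val_lt) z (hD hz) z (hD hz)).1 ?_⟩
  rw [hK z hz, natCast_cycRefl (mem_Icc.1 (hD hz)).2, ZMod.natCast_zmod_val]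
  ring

theorem exists_cycRot_or_cycRefl (hD : D ⊆ Icc 1 n) (hg : ∀ z ∈ D, g z ∈ Icc 1 n)
    (hdist : ∀ x ∈ D, ∀ y ∈ D, cycDist n (g x) (g y) = cycDist n x y) (hne : D.Nonempty) :
    (∃ c < n, ∀ z ∈ D, g z = cycRot n c z) ∨
      ∃ s < n, (∃ x ∈ D, ∃ y ∈ D, x < y ∧ 2 * (y - x) ≠ n) ∧
        ∀ z ∈ D, g z = cycRefl n s z := by
  obtain ⟨x₀, hx₀⟩ := hne
  have : NeZero n := ⟨by have := mem_Icc.1 (hD hx₀); omega⟩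
  have hsign : ∀ x ∈ D, ∀ y ∈ D, (g y : ZMod n) - g x = (y : ZMod n) - x ∨
      (g y : ZMod n) - g x = (x : ZMod n) - y := fun x hx y hy =>
    natCast_sub_eq_or_of_cycDist_eq (hD hx) (hD hy) (hg x hx) (hg y hy) (hdist x hx y hy)
  by_cases hpair : ∃ x ∈ D, ∃ y ∈ D, x < y ∧ 2 * ((y : ZMod n) - x) ≠ 0
  · obtain ⟨x, hx, y, hy, hxy, h2⟩ := hpair
    rcases eq_add_or_eq_sub_of_sub_eq_or (D := ↑D) hsign hx hy h2 with hform | hform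
    · left
      exact exists_cycRot_of_natCast_eq hD hg (g x - x) fun z hz => by
        rw [hform z hz]; ring
    · right
      obtain ⟨s, hs, hgs⟩ := exists_cycRefl_of_natCast_eq hD hg (g x + x) fun z hz => by
        rw [hform z hz]; ring
      refine ⟨s, hs, ⟨x, hx, y, hy, hxy, fun hn => h2 ?_⟩, hgs⟩
      have := congrArg (Nat.cast : ℕ → ZMod n) hn
      push_cast [Nat.cast_sub hxy.le, ZMod.natCast_self] at this
      exact this
  · left
    push Not at hpair
    refine exists_cycRot_of_natCast_eq hD hg (g x₀ - x₀) fun z hz => ?_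
    rcases hsign x₀ hx₀ z hz with h | h
    · linear_combination h
    · rcases lt_trichotomy x₀ z with hlt | rfl | hgt
      · linear_combination h - hpair x₀ hx₀ z hz hlt
      · ring
      · linear_combination h + hpair z hz x₀ hx₀ hgt

end Rigidity

def restrictTo (D : Finset ℕ) (f : ℕ → ℕ) : ℕ → Option ℕ :=
  fun z => if z ∈ D then some (f z) else none

section RestrictTo

variable {n z v : ℕ} {D E : Finset ℕ} {f g : ℕ → ℕ}

@[simp]
theorem restrictTo_eq_some : restrictTo D f z = some v ↔ z ∈ D ∧ f z = v := by
  unfold restrictTo; split_ifs with hz <;> simp [hz]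

@[simp]
theorem restrictTo_ne_none : restrictTo D f z ≠ none ↔ z ∈ D := by
  unfold restrictTo; split_ifs with hz <;> simp [hz]

theorem getD_restrictTo (hz : z ∈ D) : (restrictTo D f z).getD 0 = f z := by
  simp [restrictTo, hz]

theorem restrictTo_eq_restrictTo_iff :
    restrictTo D f = restrictTo E g ↔ D = E ∧ ∀ z ∈ D, f z = g z := by
  constructor
  · intro h
    have hD : D = E := by
      ext z; rw [← restrictTo_ne_none (f := f), h, restrictTo_ne_none]
    refine ⟨hD, fun z hz => ?_⟩
    have hz' : restrictTo E g z = some (f z) := h ▸ restrictTo_eq_some.2 ⟨hz, rfl⟩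
    exact (restrictTo_eq_some.1 hz').2.symm
  · rintro ⟨rfl, h⟩
    funext z
    unfold restrictTo
    split_ifs with hz
    · rw [h z hz]
    · rfl

theorem isPartialIsometry_restrictTo (hf : IsCycSymmetry n f) (hD : D ⊆ Icc 1 n) :
    IsPartialIsometry n (restrictTo D f) := by
  refine ⟨fun x u hxu => ?_, fun x y u hxu hyu => ?_, fun x y u v hxu hyv => ?_⟩
  · obtain ⟨hx, rfl⟩ := restrictTo_eq_some.1 hxu
    have := mem_Icc.1 (hf x (hD hx) x (hD hx)).1
    have := mem_Icc.1 (hD hx)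
    omega
  · obtain ⟨hx, rfl⟩ := restrictTo_eq_some.1 hxu
    obtain ⟨hy, hxy⟩ := restrictTo_eq_some.1 hyu
    exact (hf x (hD hx) y (hD hy)).2.1 hxy.symm
  · obtain ⟨hx, rfl⟩ := restrictTo_eq_some.1 hxu
    obtain ⟨hy, rfl⟩ := restrictTo_eq_some.1 hyv
    exact (hf x (hD hx) y (hD hy)).2.2

theorem IsPartialIsometry.exists_eq_restrictTo {α : ℕ → Option ℕ}
    (h : IsPartialIsometry n α) :
    ∃ D ⊆ Icc 1 n, ∃ g : ℕ → ℕ, α = restrictTo D g ∧ (∀ z ∈ D, g z ∈ Icc 1 n) ∧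
      ∀ x ∈ D, ∀ y ∈ D, cycDist n (g x) (g y) = cycDist n x y := by
  set D := (Icc 1 n).filter fun z => (α z).isSome
  have hsome : ∀ z ∈ D, α z = some ((α z).getD 0) := fun z hz => by
    obtain ⟨u, hu⟩ := Option.isSome_iff_exists.1 (mem_filter.1 hz).2
    rw [hu, Option.getD_some]
  refine ⟨D, filter_subset _ _, fun z => (α z).getD 0, ?_, fun z hz => ?_,
    fun x hx y hy => h.2.2 x y _ _ (hsome x hx) (hsome y hy)⟩
  · funext z
    unfold restrictTo
    split_ifs with hz
    · exact hsome z hz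
    · cases hα : α z with
      | none => rfl
      | some u =>
        obtain ⟨h1, h2, -, -⟩ := h.1 z u hα
        exact absurd (mem_filter.2 ⟨mem_Icc.2 ⟨h1, h2⟩, by simp [hα]⟩) hz
  · obtain ⟨-, -, h1, h2⟩ := h.1 z _ (hsome z hz)
    exact mem_Icc.2 ⟨h1, h2⟩

end RestrictTo

def cyclicDescents (t : ℕ) (b : ℕ → ℕ) : Finset ℕ :=
  (range t).filter fun p => b ((p + 1) % t) < b p

section Descents

variable {n t : ℕ} {a : ℕ → ℕ}

theorem card_cyclicDescents_le_one_of_le_two (b : ℕ → ℕ) (ht : t ≤ 2) :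
    #(cyclicDescents t b) ≤ 1 := by
  rw [card_le_one]
  intro p hp q hq
  simp only [cyclicDescents, mem_filter, mem_range] at hp hq
  obtain ⟨hpt, hp⟩ := hp
  obtain ⟨hqt, hq⟩ := hq
  interval_cases t <;> interval_cases p <;> interval_cases q <;> simp_all <;> omega

theorem card_cyclicDescents_cycRot_le_one {c : ℕ} (hmono : ∀ p q, p < q → q < t → a p < a q)
    (ha : ∀ p < t, a p ∈ Icc 1 n) : #(cyclicDescents t (cycRot n c ∘ a)) ≤ 1 := by
  -- an internal descent is where `a p + c` crosses `n`, which happens at most once, and then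
  -- the wrap-around is an ascent
  have hlow : ∀ p q, p ≤ q → q < t → a q + c ≤ n → a p + c ≤ n := fun p q hpq hq h => by
    rcases hpq.lt_or_eq with hpq | rfl
    · have := hmono p q hpq hq; omega
    · exact h
  have hstep : ∀ p, p + 1 < t → cycRot n c (a (p + 1)) < cycRot n c (a p) →
      a p + c ≤ n ∧ n < a (p + 1) + c := fun p hp h => by
    have := hmono p (p + 1) (by omega) hp
    have := mem_Icc.1 (ha p (by omega))
    have := mem_Icc.1 (ha (p + 1) hp)
    unfold cycRot at h; split_ifs at h <;> omega
  rw [card_le_one]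
  intro p hp q hq
  simp only [cyclicDescents, mem_filter, mem_range, Function.comp_apply] at hp hq
  by_contra hne
  wlog hpq : p < q generalizing p q
  · exact this q p hq hp (Ne.symm hne) (by omega)
  rw [Nat.mod_eq_of_lt (by omega : p + 1 < t)] at hp
  obtain ⟨hp_low, hp_high⟩ := hstep p (by omega) hp.2
  rcases (by omega : q + 1 < t ∨ q + 1 = t) with hq1 | hq1
  · rw [Nat.mod_eq_of_lt hq1] at hq
    have := hlow (p + 1) q (by omega) (by omega) (hstep q hq1 hq.2).1
    omega
  · rw [hq1, Nat.mod_self] at hq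
    have h0_low := hlow 0 p (by omega) (by omega) hp_low
    have hq_high : n < a q + c := by
      by_contra h
      have := hlow (p + 1) q (by omega) (by omega) (by omega)
      omega
    have := mem_Icc.1 (ha 0 (by omega))
    have := mem_Icc.1 (ha q (by omega))
    have hwrap := hq.2
    unfold cycRot at hwrap; split_ifs at hwrap <;> omega

theorem two_le_card_cyclicDescents_cycRefl {s : ℕ} (ht : 3 ≤ t)
    (hmono : ∀ p q, p < q → q < t → a p < a q) (ha : ∀ p < t, a p ∈ Icc 1 n) :
    2 ≤ #(cyclicDescents t (cycRefl n s ∘ a)) := by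
  -- `cycRefl n s` reverses the order on each of the arcs `x ≤ s + 1` and `s + 1 < x`
  have hdesc : ∀ p, p + 1 < t → (a (p + 1) ≤ s + 1 ∨ s + 1 < a p) →
      p ∈ cyclicDescents t (cycRefl n s ∘ a) := fun p hp h => by
    have := hmono p (p + 1) (by omega) hp
    have := mem_Icc.1 (ha p (by omega))
    have := mem_Icc.1 (ha (p + 1) hp)
    simp only [cyclicDescents, mem_filter, mem_range, Function.comp_apply,
      Nat.mod_eq_of_lt hp]
    unfold cycRefl
    refine ⟨by omega, ?_⟩
    split_ifs <;> omega
  have hwrap : a 0 ≤ s + 1 → s + 1 < a (t - 1) →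
      t - 1 ∈ cyclicDescents t (cycRefl n s ∘ a) := fun h0 h1 => by
    have := mem_Icc.1 (ha 0 (by omega))
    have := mem_Icc.1 (ha (t - 1) (by omega))
    simp only [cyclicDescents, mem_filter, mem_range, Function.comp_apply,
      Nat.sub_add_cancel (by omega : 1 ≤ t), Nat.mod_self]
    unfold cycRefl
    refine ⟨by omega, ?_⟩
    split_ifs <;> omega
  have htwo : ∀ p q, p ≠ q → p ∈ cyclicDescents t (cycRefl n s ∘ a) →
      q ∈ cyclicDescents t (cycRefl n s ∘ a) → 2 ≤ #(cyclicDescents t (cycRefl n s ∘ a)) :=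
    fun p q hpq hp hq => one_lt_card.2 ⟨p, hp, q, hq, hpq⟩
  have h01 := hmono 0 1 (by omega) (by omega)
  have h12 := hmono 1 2 (by omega) (by omega)
  have h2t : a 2 ≤ a (t - 1) := by
    rcases (by omega : 2 = t - 1 ∨ 2 < t - 1) with h | h
    · rw [← h]
    · exact (hmono 2 (t - 1) h (by omega)).le
  by_cases hlast : a (t - 1) ≤ s + 1
  · exact htwo 0 1 (by omega) (hdesc 0 (by omega) (Or.inl (show a 1 ≤ s + 1 by omega)))
      (hdesc 1 (by omega) (Or.inl (show a 2 ≤ s + 1 by omega)))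
  by_cases hfirst : a 0 ≤ s + 1
  · have hw := hwrap hfirst (by omega)
    by_cases h1 : a 1 ≤ s + 1
    · exact htwo 0 (t - 1) (by omega) (hdesc 0 (by omega) (Or.inl h1)) hw
    · exact htwo 1 (t - 1) (by omega) (hdesc 1 (by omega) (Or.inr (by omega))) hw
  · exact htwo 0 1 (by omega) (hdesc 0 (by omega) (Or.inr (by omega)))
      (hdesc 1 (by omega) (Or.inr (by omega)))

end Descents

theorem exists_strictMono_enum (D : Finset ℕ) :
    ∃ a : ℕ → ℕ, (∀ p q, p < q → q < #D → a p < a q) ∧ (∀ p < #D, a p ∈ D) ∧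
      ∀ x ∈ D, ∃ p < #D, a p = x := by
  let e := D.orderIsoOfFin rfl
  refine ⟨fun p => if h : p < #D then (e ⟨p, h⟩ : ℕ) else 0, fun p q hpq hq => ?_,
    fun p hp => ?_, fun x hx => ?_⟩
  · simp only [dif_pos (hpq.trans hq), dif_pos hq]
    exact e.strictMono (a := ⟨p, hpq.trans hq⟩) (b := ⟨q, hq⟩) hpq
  · simp only [dif_pos hp]
    exact (e ⟨p, hp⟩).2
  · obtain ⟨p, hp⟩ := e.surjective ⟨x, hx⟩
    exact ⟨p, p.2, by simp only [dif_pos p.2, hp]⟩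

section Orientation

variable {n : ℕ} {D : Finset ℕ} {f : ℕ → ℕ}

theorem isOrientPres_restrictTo_iff :
    IsOrientPres (restrictTo D f) ↔ ∀ (t : ℕ) (a : ℕ → ℕ),
      (∀ p q, p < q → q < t → a p < a q) → (∀ p < t, a p ∈ D) →
        (∀ x ∈ D, ∃ p < t, a p = x) → #(cyclicDescents t (f ∘ a)) ≤ 1 := by
  have hdesc : ∀ t a, (∀ p < t, a p ∈ D) →
      (range t).filter (fun p => (restrictTo D f (a ((p + 1) % t))).getD 0 <
        (restrictTo D f (a p)).getD 0) = cyclicDescents t (f ∘ a) := fun t a ha => by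
    refine filter_congr fun p hp => ?_
    rw [mem_range] at hp
    rw [getD_restrictTo (ha p hp), getD_restrictTo (ha _ (Nat.mod_lt _ (by omega)))]
    rfl
  unfold IsOrientPres
  simp only [restrictTo_ne_none]
  exact forall₂_congr fun t a => imp_congr_right fun _ => forall_congr' fun ha =>
    imp_congr_right fun _ => by rw [hdesc t a ha]

theorem isOrientPres_restrictTo_cycRot {c : ℕ} (hD : D ⊆ Icc 1 n) :
    IsOrientPres (restrictTo D (cycRot n c)) :=
  isOrientPres_restrictTo_iff.2 fun _ _ hmono ha _ =>
    card_cyclicDescents_cycRot_le_one hmono fun p hp => hD (ha p hp)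

theorem isOrientPres_restrictTo_of_card_le_two (hD : #D ≤ 2) :
    IsOrientPres (restrictTo D f) := by
  refine isOrientPres_restrictTo_iff.2 fun t a hmono ha _ =>
    card_cyclicDescents_le_one_of_le_two _ ?_
  have hinj : Set.InjOn a ↑(range t) := fun p hp q hq h => by
    simp only [coe_range, Set.mem_Iio] at hp hq
    by_contra hne
    rcases lt_or_gt_of_ne hne with hpq | hqp
    · exact (hmono p q hpq hq).ne h
    · exact (hmono q p hqp hp).ne h.symm
  calc t = #((range t).image a) := by rw [card_image_of_injOn hinj, card_range]
    _ ≤ #D := card_le_card (image_subset_iff.2 fun p hp => ha p (mem_range.1 hp))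
    _ ≤ 2 := hD

theorem not_isOrientPres_restrictTo_cycRefl {s : ℕ} (hD : D ⊆ Icc 1 n) (h3 : 3 ≤ #D) :
    ¬ IsOrientPres (restrictTo D (cycRefl n s)) := fun h => by
  obtain ⟨a, hmono, ha, hsurj⟩ := exists_strictMono_enum D
  have := isOrientPres_restrictTo_iff.1 h _ a hmono ha hsurj
  have := two_le_card_cyclicDescents_cycRefl (s := s) h3 hmono fun p hp => hD (ha p hp)
  omega

end Orientation

section Census

open scoped Classical

variable {n : ℕ} {α : ℕ → Option ℕ}

noncomputable def rotRestrictions (n : ℕ) : Finset (ℕ → Option ℕ) :=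
  (range n ×ˢ (Icc 1 n).powerset.erase ∅).image fun p => restrictTo p.2 (cycRot n p.1)

/-- On an antipodal pair `x < y` (`2 * (y - x) = n`) every reflection agrees with a rotation. -/
def nonAntipodalPairs (n : ℕ) : Finset (ℕ × ℕ) :=
  {q ∈ Icc 1 n ×ˢ Icc 1 n | q.1 < q.2 ∧ 2 * (q.2 - q.1) ≠ n}

noncomputable def reflRestrictions (n : ℕ) : Finset (ℕ → Option ℕ) :=
  (range n ×ˢ nonAntipodalPairs n).image fun p => restrictTo {p.2.1, p.2.2} (cycRefl n p.1)

theorem isPartialIsometry_and_isOrientPres_of_mem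
    (h : α ∈ insert (restrictTo ∅ id) (rotRestrictions n ∪ reflRestrictions n)) :
    IsPartialIsometry n α ∧ IsOrientPres α := by
  simp only [rotRestrictions, reflRestrictions, nonAntipodalPairs, mem_insert, mem_union,
    mem_image, mem_product, mem_range, mem_erase, mem_powerset, mem_filter, Prod.exists] at h
  rcases h with rfl | ⟨c, D, ⟨hc, -, hD⟩, rfl⟩ | ⟨s, x, y, ⟨hs, ⟨hx, hy⟩, -⟩, rfl⟩
  · exact ⟨isPartialIsometry_restrictTo (fun x hx _ _ => ⟨hx, id, rfl⟩) (empty_subset _),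
      isOrientPres_restrictTo_of_card_le_two (by simp)⟩
  · exact ⟨isPartialIsometry_restrictTo (isCycSymmetry_cycRot hc) hD,
      isOrientPres_restrictTo_cycRot hD⟩
  · exact ⟨isPartialIsometry_restrictTo (isCycSymmetry_cycRefl hs)
      (insert_subset hx (singleton_subset_iff.2 hy)),
      isOrientPres_restrictTo_of_card_le_two card_le_two⟩

theorem mem_of_isPartialIsometry_of_isOrientPres (hα : IsPartialIsometry n α)
    (ho : IsOrientPres α) :
    α ∈ insert (restrictTo ∅ id) (rotRestrictions n ∪ reflRestrictions n) := by
  obtain ⟨D, hD, g, rfl, hg, hdist⟩ := hα.exists_eq_restrictTo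
  rcases D.eq_empty_or_nonempty with rfl | hne
  · exact mem_insert.2 (Or.inl (restrictTo_eq_restrictTo_iff.2 ⟨rfl, by simp⟩))
  refine mem_insert_of_mem (mem_union.2 ?_)
  rcases exists_cycRot_or_cycRefl hD hg hdist hne with
    ⟨c, hc, hgc⟩ | ⟨s, hs, ⟨x, hx, y, hy, hxy, hanti⟩, hgs⟩
  · left
    rw [restrictTo_eq_restrictTo_iff.2 ⟨rfl, hgc⟩]
    exact mem_image.2 ⟨(c, D), mem_product.2 ⟨mem_range.2 hc,
      mem_erase.2 ⟨hne.ne_empty, mem_powerset.2 hD⟩⟩, rfl⟩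
  · right
    rw [restrictTo_eq_restrictTo_iff.2 ⟨rfl, hgs⟩] at ho ⊢
    have hcard : #D ≤ 2 := by
      by_contra h
      exact not_isOrientPres_restrictTo_cycRefl hD (by omega) ho
    have hDxy : {x, y} = D := eq_of_subset_of_card_le
      (insert_subset hx (singleton_subset_iff.2 hy)) (by rwa [card_pair hxy.ne])
    rw [← hDxy]
    exact mem_image.2 ⟨(s, x, y), mem_product.2 ⟨mem_range.2 hs,
      mem_filter.2 ⟨mem_product.2 ⟨hD hx, hD hy⟩, hxy, hanti⟩⟩, rfl⟩

theorem setOf_isPartialIsometry_and_isOrientPres (n : ℕ) :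
    {α | IsPartialIsometry n α ∧ IsOrientPres α} =
      ↑(insert (restrictTo ∅ id) (rotRestrictions n ∪ reflRestrictions n)) := by
  ext α
  exact ⟨fun h => mem_of_isPartialIsometry_of_isOrientPres h.1 h.2,
    isPartialIsometry_and_isOrientPres_of_mem⟩

theorem restrictTo_empty_notMem (n : ℕ) :
    restrictTo ∅ id ∉ rotRestrictions n ∪ reflRestrictions n := by
  simp only [rotRestrictions, reflRestrictions, mem_union, mem_image, mem_product, mem_erase,
    Prod.exists, not_or, not_exists, not_and]
  refine ⟨fun c D hD he => hD.2.1 (restrictTo_eq_restrictTo_iff.1 he).1, fun s x y _ he => ?_⟩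
  exact insert_ne_empty _ _ (restrictTo_eq_restrictTo_iff.1 he).1

theorem disjoint_rotRestrictions_reflRestrictions (n : ℕ) :
    Disjoint (rotRestrictions n) (reflRestrictions n) := by
  simp only [disjoint_left, rotRestrictions, reflRestrictions, nonAntipodalPairs, mem_image,
    mem_product, mem_range, mem_filter, mem_Icc, Prod.exists, not_exists, not_and]
  rintro _ ⟨c, D, ⟨hc, -⟩, rfl⟩ s x y ⟨hs, ⟨⟨hx, -⟩, -, hy⟩, hxy, hanti⟩ he
  obtain ⟨rfl, hval⟩ := restrictTo_eq_restrictTo_iff.1 he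
  exact hanti (two_mul_sub_eq_of_cycRot_eq_cycRefl hs hx hxy hy (hval x (by simp)).symm
    (hval y (by simp)).symm)

theorem card_rotRestrictions (n : ℕ) : #(rotRestrictions n) = n * (2 ^ n - 1) := by
  rw [rotRestrictions, card_image_of_injOn, card_product, card_range,
    card_erase_of_mem (empty_mem_powerset _), card_powerset, Nat.card_Icc, Nat.add_sub_cancel]
  rintro ⟨c, D⟩ hcD ⟨c', D'⟩ hcD' he
  simp only [coe_product, Set.mem_prod, mem_coe, mem_range, mem_erase] at hcD hcD'
  obtain ⟨rfl, hval⟩ := restrictTo_eq_restrictTo_iff.1 he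
  obtain ⟨z, hz⟩ := nonempty_iff_ne_empty.2 hcD.2.1
  rw [eq_of_cycRot_eq hcD.1 hcD'.1 (hval z hz)]

theorem card_reflRestrictions (n : ℕ) :
    #(reflRestrictions n) = n * #(nonAntipodalPairs n) := by
  rw [reflRestrictions, card_image_of_injOn, card_product, card_range]
  rintro ⟨s, x, y⟩ h ⟨s', x', y'⟩ h' he
  simp only [nonAntipodalPairs, coe_product, Set.mem_prod, mem_coe, mem_range, mem_filter,
    mem_product] at h h'
  obtain ⟨hpair, hval⟩ := restrictTo_eq_restrictTo_iff.1 he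
  have hx : x = x' ∨ x = y' := by simpa using (Finset.ext_iff.1 hpair x).1
  have hy : y = x' ∨ y = y' := by simpa using (Finset.ext_iff.1 hpair y).1
  have hx' : x' = x ∨ x' = y := by simpa using (Finset.ext_iff.1 hpair x').2
  obtain ⟨rfl, rfl⟩ : x = x' ∧ y = y' := by omega
  rw [eq_of_cycRefl_eq h.1 h'.1 h.2.1.1 (hval x (mem_insert_self x {y}))]

theorem card_filter_lt_Icc (n : ℕ) : #{q ∈ Icc 1 n ×ˢ Icc 1 n | q.1 < q.2} = n.choose 2 := by
  rw [card_product_filter_lt, Nat.card_Icc, Nat.add_sub_cancel]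

theorem card_nonAntipodalPairs_two_mul_add_one (m : ℕ) :
    #(nonAntipodalPairs (2 * m + 1)) = (2 * m + 1) * m := by
  have hodd : nonAntipodalPairs (2 * m + 1) =
      {q ∈ Icc 1 (2 * m + 1) ×ˢ Icc 1 (2 * m + 1) | q.1 < q.2} :=
    filter_congr fun q _ => by omega
  rw [hodd, card_filter_lt_Icc, Nat.choose_two_right, Nat.add_sub_cancel,
    show (2 * m + 1) * (2 * m) = (2 * m + 1) * m * 2 by ring, Nat.mul_div_cancel _ two_pos]

theorem card_nonAntipodalPairs_two_mul (m : ℕ) :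
    #(nonAntipodalPairs (2 * m)) + 2 * m = 2 * m * m := by
  set L := {q ∈ Icc 1 (2 * m) ×ˢ Icc 1 (2 * m) | q.1 < q.2}
  have hL : #L = m * (2 * m - 1) := by
    rw [card_filter_lt_Icc, Nat.choose_two_right,
      show 2 * m * (2 * m - 1) = m * (2 * m - 1) * 2 by ring, Nat.mul_div_cancel _ two_pos]
  have hantipodal : {q ∈ L | ¬ 2 * (q.2 - q.1) ≠ 2 * m} = (Icc 1 m).image fun x => (x, x + m) := by
    ext ⟨x, y⟩
    simp only [L, mem_filter, mem_product, mem_Icc, mem_image, Prod.mk.injEq]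
    constructor
    · rintro ⟨⟨⟨⟨hx, -⟩, -, hy⟩, hxy⟩, hanti⟩
      exact ⟨x, ⟨hx, by omega⟩, rfl, by omega⟩
    · rintro ⟨x, ⟨hx, hxm⟩, rfl, rfl⟩
      omega
  have hsplit := card_filter_add_card_filter_not (s := L) fun q => 2 * (q.2 - q.1) ≠ 2 * m
  rw [hantipodal, card_image_of_injOn fun x _ y _ h => (Prod.mk.inj h).1, Nat.card_Icc,
    Nat.add_sub_cancel, hL, filter_filter] at hsplit
  rw [nonAntipodalPairs]
  rcases m with _ | m
  · simp
  · rw [show 2 * (m + 1) - 1 = 2 * m + 1 by omega] at hsplit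
    nlinarith

theorem ncard_setOf_isPartialIsometry_and_isOrientPres (n : ℕ) :
    {α | IsPartialIsometry n α ∧ IsOrientPres α}.ncard =
      n * (2 ^ n - 1) + n * #(nonAntipodalPairs n) + 1 := by
  rw [setOf_isPartialIsometry_and_isOrientPres, Set.ncard_coe_finset,
    card_insert_of_notMem (restrictTo_empty_notMem n),
    card_union_of_disjoint (disjoint_rotRestrictions_reflRestrictions n),
    card_rotRestrictions, card_reflRestrictions]

end Census

theorem stmt16_general (n : ℕ) :
    (({α : ℕ → Option ℕ | IsPartialIsometry n α ∧ IsOrientPres α}.ncard : ℤ)) =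
      (n : ℤ) * 2 ^ n + (n : ℤ) ^ 2 * (n - 1) / 2 -
        (1 + (-1) ^ n) * (n : ℤ) ^ 2 / 4 - n + 1 := by
  rw [ncard_setOf_isPartialIsometry_and_isOrientPres]
  have h2n : 1 ≤ 2 ^ n := Nat.one_le_two_pow
  obtain ⟨m, rfl | rfl⟩ := Nat.even_or_odd' n
  · have hP : (#(nonAntipodalPairs (2 * m)) : ℤ) = 2 * m * m - 2 * m := by
      have := card_nonAntipodalPairs_two_mul m; zify at this; linarith
    have h1 : ((2 * m : ℕ) : ℤ) ^ 2 * ((2 * m : ℕ) - 1) / 2 = 2 * m ^ 2 * (2 * m - 1) :=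
      Int.ediv_eq_of_eq_mul_left two_ne_zero (by push_cast; ring)
    have h2 : (1 + (-1) ^ (2 * m)) * ((2 * m : ℕ) : ℤ) ^ 2 / 4 = 2 * m ^ 2 :=
      Int.ediv_eq_of_eq_mul_left four_ne_zero (by rw [pow_mul]; push_cast; ring)
    rw [h1, h2]
    push_cast [Nat.cast_sub h2n, hP]
    ring
  · have h1 : ((2 * m + 1 : ℕ) : ℤ) ^ 2 * ((2 * m + 1 : ℕ) - 1) / 2 = (2 * m + 1) ^ 2 * m :=
      Int.ediv_eq_of_eq_mul_left two_ne_zero (by push_cast; ring)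
    have h2 : (1 + (-1) ^ (2 * m + 1)) * ((2 * m + 1 : ℕ) : ℤ) ^ 2 / 4 = 0 := by
      rw [pow_succ, pow_mul]; norm_num
    rw [h1, h2, card_nonAntipodalPairs_two_mul_add_one]
    push_cast [Nat.cast_sub h2n]
    ring

theorem stmt16 (n : ℕ) (hn : 3 ≤ n) :
    (({α : ℕ → Option ℕ | IsPartialIsometry n α ∧ IsOrientPres α}.ncard : ℤ)) =
      (n : ℤ) * 2 ^ n + (n : ℤ) ^ 2 * (n - 1) / 2 -
        (1 + (-1) ^ n) * (n : ℤ) ^ 2 / 4 - n + 1 :=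
  stmt16_general n
end

section
/- The number of monotone partial isometries of C_n satisfies |MDI_n| = 2·|ODI_n| - n² - 1; consequently |MDI_n| = 3·2^{n+1} + (n+1)n(n-1)/3 - ((5+(-1)^n)/4)·n² - 4n - 5. -/
def IsOrderRev (α : ℕ → Option ℕ) : Prop :=
  ∀ x y u v, α x = some u → α y = some v → x ≤ y → v ≤ u

namespace Cyc

open Finset

/-! ### Encodings -/

/-- the empty map -/
def enc0 : ℕ → Option ℕ := fun _ => none

/-- rank one maps -/
def encR (p : ℕ × ℕ) : ℕ → Option ℕ := fun z => if z = p.1 then some p.2 else none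

/-- domain of a translation-type map: min `x`, max `x+g`, interior shape `S ⊆ [1,g-1]` -/
def domT (g : ℕ) (S : Finset ℕ) (x : ℕ) : Finset ℕ :=
  insert x (insert (x + g) (S.image (· + x)))

lemma mem_domT {g : ℕ} {S : Finset ℕ} {x z : ℕ} :
    z ∈ domT g S x ↔ z = x ∨ z = x + g ∨ ∃ s ∈ S, s + x = z := by
  simp [domT]

/-- translation maps, rank ≥ 2 -/
def encT (p : ℕ × Finset ℕ × ℕ × ℕ) : ℕ → Option ℕ :=
  fun z => if z ∈ domT p.1 p.2.1 p.2.2.1 then some (z + p.2.2.2 - p.2.2.1) else none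

/-- anti-translation maps, rank ≥ 2 (here `p.2.2.2` is the image of the max) -/
def encA (p : ℕ × Finset ℕ × ℕ × ℕ) : ℕ → Option ℕ :=
  fun z => if z ∈ domT p.1 p.2.1 p.2.2.1 then some (p.2.2.1 + p.1 + p.2.2.2 - z) else none

/-- order preserving flips, rank 2 -/
def encF (n : ℕ) (p : ℕ × ℕ × ℕ) : ℕ → Option ℕ :=
  fun z => if z = p.2.1 then some p.2.2 else
    if z = p.2.1 + p.1 then some (p.2.2 + (n - p.1)) else none

/-- order reversing flips, rank 2 -/
def encG (n : ℕ) (p : ℕ × ℕ × ℕ) : ℕ → Option ℕ :=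
  fun z => if z = p.2.1 then some (p.2.2 + (n - p.1)) else
    if z = p.2.1 + p.1 then some p.2.2 else none

/-! ### Parameter finsets -/

def PT (n : ℕ) : Finset (ℕ × Finset ℕ × ℕ × ℕ) :=
  (Icc 1 (n-1)).biUnion (fun g =>
    {g} ×ˢ ((Icc 1 (g-1)).powerset ×ˢ (Icc 1 (n-g) ×ˢ Icc 1 (n-g))))

def PF (n : ℕ) : Finset (ℕ × ℕ × ℕ) :=
  ((Icc 1 (n-1)).filter (fun a => 2*a ≠ n)).biUnion (fun a =>
    {a} ×ˢ (Icc 1 (n-a) ×ˢ Icc 1 a))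

lemma mem_PT {n : ℕ} {p : ℕ × Finset ℕ × ℕ × ℕ} :
    p ∈ PT n ↔ (1 ≤ p.1 ∧ p.1 ≤ n - 1) ∧ p.2.1 ⊆ Icc 1 (p.1 - 1) ∧
      (1 ≤ p.2.2.1 ∧ p.2.2.1 ≤ n - p.1) ∧ (1 ≤ p.2.2.2 ∧ p.2.2.2 ≤ n - p.1) := by
  obtain ⟨g, S, x, u⟩ := p
  simp only [PT, Finset.mem_biUnion, Finset.mem_product, Finset.mem_powerset,
    Finset.mem_singleton, Finset.mem_Icc]
  constructor
  · rintro ⟨a, ⟨h1, h2⟩, rfl, hS, hx, hu⟩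
    exact ⟨⟨h1, h2⟩, hS, hx, hu⟩
  · rintro ⟨⟨h1, h2⟩, hS, hx, hu⟩
    exact ⟨g, ⟨h1, h2⟩, rfl, hS, hx, hu⟩

lemma mem_PF {n : ℕ} {p : ℕ × ℕ × ℕ} :
    p ∈ PF n ↔ (1 ≤ p.1 ∧ p.1 ≤ n - 1 ∧ 2 * p.1 ≠ n) ∧
      (1 ≤ p.2.1 ∧ p.2.1 ≤ n - p.1) ∧ (1 ≤ p.2.2 ∧ p.2.2 ≤ p.1) := by
  obtain ⟨a, x, u⟩ := p
  simp only [PF, Finset.mem_biUnion, Finset.mem_product, Finset.mem_filter,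
    Finset.mem_singleton, Finset.mem_Icc]
  constructor
  · rintro ⟨b, ⟨⟨h1, h2⟩, h3⟩, rfl, hx, hu⟩
    exact ⟨⟨h1, h2, h3⟩, hx, hu⟩
  · rintro ⟨⟨h1, h2, h3⟩, hx, hu⟩
    exact ⟨a, ⟨⟨h1, h2⟩, h3⟩, rfl, hx, hu⟩

/-! ### The six families as sets -/

def S0 : Set (ℕ → Option ℕ) := {enc0}
def S1 (n : ℕ) : Set (ℕ → Option ℕ) := encR '' ↑(Icc 1 n ×ˢ Icc 1 n)
def ST (n : ℕ) : Set (ℕ → Option ℕ) := encT '' ↑(PT n)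
def SA (n : ℕ) : Set (ℕ → Option ℕ) := encA '' ↑(PT n)
def SF (n : ℕ) : Set (ℕ → Option ℕ) := encF n '' ↑(PF n)
def SG (n : ℕ) : Set (ℕ → Option ℕ) := encG n '' ↑(PF n)


/-! ### Characterisation of values of encodings -/

lemma encR_eq_some {p : ℕ × ℕ} {z w : ℕ} :
    encR p z = some w ↔ z = p.1 ∧ w = p.2 := by
  unfold encR; split <;> simp_all [eq_comm]

lemma encT_eq_some {p : ℕ × Finset ℕ × ℕ × ℕ} {z w : ℕ} :
    encT p z = some w ↔ z ∈ domT p.1 p.2.1 p.2.2.1 ∧ w = z + p.2.2.2 - p.2.2.1 := by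
  unfold encT; split <;> simp_all [eq_comm]

lemma encA_eq_some {p : ℕ × Finset ℕ × ℕ × ℕ} {z w : ℕ} :
    encA p z = some w ↔ z ∈ domT p.1 p.2.1 p.2.2.1 ∧ w = p.2.2.1 + p.1 + p.2.2.2 - z := by
  unfold encA; split <;> simp_all [eq_comm]

lemma encF_eq_some {n : ℕ} {p : ℕ × ℕ × ℕ} {z w : ℕ} :
    encF n p z = some w ↔ (z = p.2.1 ∧ w = p.2.2) ∨
      (z ≠ p.2.1 ∧ z = p.2.1 + p.1 ∧ w = p.2.2 + (n - p.1)) := by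
  unfold encF; split
  · simp_all [eq_comm]
  · split <;> simp_all [eq_comm]

lemma encG_eq_some {n : ℕ} {p : ℕ × ℕ × ℕ} {z w : ℕ} :
    encG n p z = some w ↔ (z = p.2.1 ∧ w = p.2.2 + (n - p.1)) ∨
      (z ≠ p.2.1 ∧ z = p.2.1 + p.1 ∧ w = p.2.2) := by
  unfold encG; split
  · simp_all [eq_comm]
  · split <;> simp_all [eq_comm]

lemma domT_bounds {g x z : ℕ} {S : Finset ℕ} (hS : S ⊆ Icc 1 (g-1)) (hz : z ∈ domT g S x) :
    x ≤ z ∧ z ≤ x + g := by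
  rcases mem_domT.1 hz with rfl | rfl | ⟨s, hs, rfl⟩
  · omega
  · omega
  · have := mem_Icc.1 (hS hs); omega

/-! ### Each family consists of monotone partial isometries -/

lemma enc0_PI (n : ℕ) : IsPartialIsometry n enc0 ∧ IsOrderPres enc0 ∧ IsOrderRev enc0 := by
  refine ⟨⟨?_, ?_, ?_⟩, ?_, ?_⟩ <;> intro x y <;> simp [enc0]

lemma encR_PI {n : ℕ} {p : ℕ × ℕ} (hp : p ∈ Icc 1 n ×ˢ Icc 1 n) :
    IsPartialIsometry n (encR p) ∧ IsOrderPres (encR p) ∧ IsOrderRev (encR p) := by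
  rw [Finset.mem_product, mem_Icc, mem_Icc] at hp
  refine ⟨⟨?_, ?_, ?_⟩, ?_, ?_⟩
  · intro x u h; rw [encR_eq_some] at h; omega
  · intro x y u h1 h2; rw [encR_eq_some] at h1 h2; omega
  · intro x y u v h1 h2; rw [encR_eq_some] at h1 h2
    obtain ⟨rfl, rfl⟩ := h1; obtain ⟨e1, rfl⟩ := h2; rw [e1]; unfold cycDist; omega
  · intro x y u v h1 h2 _; rw [encR_eq_some] at h1 h2; omega
  · intro x y u v h1 h2 _; rw [encR_eq_some] at h1 h2; omega

lemma encT_PI {n : ℕ} {p : ℕ × Finset ℕ × ℕ × ℕ} (hp : p ∈ PT n) :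
    IsPartialIsometry n (encT p) ∧ IsOrderPres (encT p) := by
  obtain ⟨g, S, x, u⟩ := p
  obtain ⟨⟨hg1, hg2⟩, hS, ⟨hx1, hx2⟩, ⟨hu1, hu2⟩⟩ := mem_PT.1 hp
  dsimp only at hg1 hg2 hS hx1 hx2 hu1 hu2
  refine ⟨⟨?_, ?_, ?_⟩, ?_⟩
  · intro z w h; rw [encT_eq_some] at h; dsimp only at h
    have := domT_bounds hS h.1; omega
  · intro z z' w h1 h2; rw [encT_eq_some] at h1 h2; dsimp only at h1 h2
    have := domT_bounds hS h1.1; have := domT_bounds hS h2.1; omega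
  · intro z z' w w' h1 h2; rw [encT_eq_some] at h1 h2; dsimp only at h1 h2
    have := domT_bounds hS h1.1; have := domT_bounds hS h2.1
    unfold cycDist; omega
  · intro z z' w w' h1 h2 hle; rw [encT_eq_some] at h1 h2; dsimp only at h1 h2
    have := domT_bounds hS h1.1; have := domT_bounds hS h2.1; omega

lemma encA_PI {n : ℕ} {p : ℕ × Finset ℕ × ℕ × ℕ} (hp : p ∈ PT n) :
    IsPartialIsometry n (encA p) ∧ IsOrderRev (encA p) := by
  obtain ⟨g, S, x, u⟩ := p
  obtain ⟨⟨hg1, hg2⟩, hS, ⟨hx1, hx2⟩, ⟨hu1, hu2⟩⟩ := mem_PT.1 hp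
  dsimp only at hg1 hg2 hS hx1 hx2 hu1 hu2
  refine ⟨⟨?_, ?_, ?_⟩, ?_⟩
  · intro z w h; rw [encA_eq_some] at h; dsimp only at h
    have := domT_bounds hS h.1; omega
  · intro z z' w h1 h2; rw [encA_eq_some] at h1 h2; dsimp only at h1 h2
    have := domT_bounds hS h1.1; have := domT_bounds hS h2.1; omega
  · intro z z' w w' h1 h2; rw [encA_eq_some] at h1 h2; dsimp only at h1 h2
    have := domT_bounds hS h1.1; have := domT_bounds hS h2.1
    unfold cycDist; omega
  · intro z z' w w' h1 h2 hle; rw [encA_eq_some] at h1 h2; dsimp only at h1 h2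
    have := domT_bounds hS h1.1; have := domT_bounds hS h2.1; omega

lemma encF_PI {n : ℕ} {p : ℕ × ℕ × ℕ} (hp : p ∈ PF n) :
    IsPartialIsometry n (encF n p) ∧ IsOrderPres (encF n p) := by
  obtain ⟨a, x, u⟩ := p
  obtain ⟨⟨ha1, ha2, ha3⟩, ⟨hx1, hx2⟩, ⟨hu1, hu2⟩⟩ := mem_PF.1 hp
  dsimp only at ha1 ha2 ha3 hx1 hx2 hu1 hu2
  refine ⟨⟨?_, ?_, ?_⟩, ?_⟩
  · intro z w h; rw [encF_eq_some] at h; dsimp only at h; omega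
  · intro z z' w h1 h2; rw [encF_eq_some] at h1 h2; dsimp only at h1 h2; omega
  · intro z z' w w' h1 h2; rw [encF_eq_some] at h1 h2; dsimp only at h1 h2
    unfold cycDist; omega
  · intro z z' w w' h1 h2 hle; rw [encF_eq_some] at h1 h2; dsimp only at h1 h2; omega

lemma encG_PI {n : ℕ} {p : ℕ × ℕ × ℕ} (hp : p ∈ PF n) :
    IsPartialIsometry n (encG n p) ∧ IsOrderRev (encG n p) := by
  obtain ⟨a, x, u⟩ := p
  obtain ⟨⟨ha1, ha2, ha3⟩, ⟨hx1, hx2⟩, ⟨hu1, hu2⟩⟩ := mem_PF.1 hp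
  dsimp only at ha1 ha2 ha3 hx1 hx2 hu1 hu2
  refine ⟨⟨?_, ?_, ?_⟩, ?_⟩
  · intro z w h; rw [encG_eq_some] at h; dsimp only at h; omega
  · intro z z' w h1 h2; rw [encG_eq_some] at h1 h2; dsimp only at h1 h2; omega
  · intro z z' w w' h1 h2; rw [encG_eq_some] at h1 h2; dsimp only at h1 h2
    unfold cycDist; omega
  · intro z z' w w' h1 h2 hle; rw [encG_eq_some] at h1 h2; dsimp only at h1 h2; omega


/-! ### Rigidity lemmas -/

lemma pair_pres {n : ℕ} {α : ℕ → Option ℕ} (hPI : IsPartialIsometry n α)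
    (hp : IsOrderPres α) {x y u v : ℕ} (hxy : x < y)
    (hx : α x = some u) (hy : α y = some v) :
    u < v ∧ (u + y = v + x ∨ v + y = u + x + n) := by
  have hb1 := hPI.1 x u hx
  have hb2 := hPI.1 y v hy
  have huv : u ≤ v := hp x y u v hx hy hxy.le
  have hne : u ≠ v := by
    rintro rfl; exact absurd (hPI.2.1 x y u hx hy) hxy.ne
  have hd := hPI.2.2 x y u v hx hy
  unfold cycDist at hd
  omega

lemma pair_rev {n : ℕ} {α : ℕ → Option ℕ} (hPI : IsPartialIsometry n α)
    (hp : IsOrderRev α) {x y u v : ℕ} (hxy : x < y)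
    (hx : α x = some u) (hy : α y = some v) :
    v < u ∧ (v + y = u + x ∨ u + y = v + x + n) := by
  have hb1 := hPI.1 x u hx
  have hb2 := hPI.1 y v hy
  have huv : v ≤ u := hp x y u v hx hy hxy.le
  have hne : u ≠ v := by
    rintro rfl; exact absurd (hPI.2.1 x y u hx hy) hxy.ne
  have hd := hPI.2.2 x y u v hx hy
  unfold cycDist at hd
  omega

lemma triple_pres {n : ℕ} {α : ℕ → Option ℕ} (hPI : IsPartialIsometry n α)
    (hp : IsOrderPres α) {x y z u v w : ℕ} (hxy : x < y) (hyz : y < z)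
    (hx : α x = some u) (hy : α y = some v) (hz : α z = some w) :
    u + y = v + x ∧ v + z = w + y := by
  have h1 := pair_pres hPI hp hxy hx hy
  have h2 := pair_pres hPI hp hyz hy hz
  have h3 := pair_pres hPI hp (hxy.trans hyz) hx hz
  have hb1 := hPI.1 x u hx
  have hb3 := hPI.1 z w hz
  omega

lemma triple_rev {n : ℕ} {α : ℕ → Option ℕ} (hPI : IsPartialIsometry n α)
    (hp : IsOrderRev α) {x y z u v w : ℕ} (hxy : x < y) (hyz : y < z)
    (hx : α x = some u) (hy : α y = some v) (hz : α z = some w) :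
    u + x = v + y ∧ v + y = w + z := by
  have h1 := pair_rev hPI hp hxy hx hy
  have h2 := pair_rev hPI hp hyz hy hz
  have h3 := pair_rev hPI hp (hxy.trans hyz) hx hz
  have hb1 := hPI.1 x u hx
  have hb3 := hPI.1 z w hz
  omega


/-! ### Classification -/

lemma classify_setup {n : ℕ} {α : ℕ → Option ℕ} (hPI : IsPartialIsometry n α) :
    ∀ z, z ∈ (Icc 1 n).filter (fun z => α z ≠ none) ↔ α z ≠ none := by
  intro z
  simp only [mem_filter, mem_Icc]
  refine ⟨fun h => h.2, fun h => ⟨?_, h⟩⟩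
  obtain ⟨u, hu⟩ := Option.ne_none_iff_exists'.1 h
  exact ⟨(hPI.1 z u hu).1, (hPI.1 z u hu).2.1⟩

lemma classify_small {n : ℕ} {α : ℕ → Option ℕ} (hPI : IsPartialIsometry n α)
    (hc : ((Icc 1 n).filter (fun z => α z ≠ none)).card < 2) :
    α ∈ S0 ∪ S1 n := by
  classical
  set D := (Icc 1 n).filter (fun z => α z ≠ none) with hDdef
  have hmemD : ∀ z, z ∈ D ↔ α z ≠ none := classify_setup hPI
  interval_cases h : D.card
  · left
    have hD : D = ∅ := Finset.card_eq_zero.1 h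
    have : α = enc0 := by
      funext z
      have hz : α z = none := by
        by_contra hne
        have := (hmemD z).2 hne
        rw [hD] at this
        exact absurd this (Finset.notMem_empty z)
      simpa [enc0]
    simp [S0, this]
  · right
    obtain ⟨x, hx⟩ := Finset.card_eq_one.1 h
    have hxD : x ∈ D := hx ▸ Finset.mem_singleton_self x
    obtain ⟨u, hu⟩ := Option.ne_none_iff_exists'.1 ((hmemD x).1 hxD)
    have hb := hPI.1 x u hu
    refine ⟨(x, u), ?_, ?_⟩
    · simp only [Finset.coe_product, Set.mem_prod, Finset.mem_coe, mem_Icc]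
      exact ⟨⟨hb.1, hb.2.1⟩, hb.2.2.1, hb.2.2.2⟩
    · funext z
      by_cases hz : z = x
      · subst hz; simp [encR, hu.symm]
      · have : α z = none := by
          by_contra hne
          have := (hmemD z).2 hne
          rw [hx] at this
          exact hz (Finset.mem_singleton.1 this)
        simp [encR, hz, this]

lemma classify_pres {n : ℕ} {α : ℕ → Option ℕ} (hPI : IsPartialIsometry n α)
    (hp : IsOrderPres α) : α ∈ S0 ∪ S1 n ∪ ST n ∪ SF n := by
  classical
  set D := (Icc 1 n).filter (fun z => α z ≠ none) with hDdef
  have hmemD : ∀ z, z ∈ D ↔ α z ≠ none := classify_setup hPI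
  rcases Nat.lt_or_ge D.card 2 with hc | hc
  · have := classify_small hPI hc
    rcases this with h | h
    · exact Or.inl (Or.inl (Or.inl h))
    · exact Or.inl (Or.inl (Or.inr h))
  have hne : D.Nonempty := Finset.card_pos.1 (by omega)
  set x := D.min' hne with hxdef
  set m := D.max' hne with hmdef
  clear_value x m
  have hxD : x ∈ D := hxdef ▸ Finset.min'_mem D hne
  have hmD : m ∈ D := hmdef ▸ Finset.max'_mem D hne
  have hxm : x < m := hxdef ▸ hmdef ▸ Finset.min'_lt_max'_of_card D (by omega)
  have hxle : ∀ z ∈ D, x ≤ z := fun z hz => hxdef ▸ Finset.min'_le D z hz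
  have hmge : ∀ z ∈ D, z ≤ m := fun z hz => hmdef ▸ Finset.le_max' D z hz
  obtain ⟨u, hu⟩ := Option.ne_none_iff_exists'.1 ((hmemD x).1 hxD)
  obtain ⟨v, hv⟩ := Option.ne_none_iff_exists'.1 ((hmemD m).1 hmD)
  have hbu := hPI.1 x u hu
  have hbv := hPI.1 m v hv
  by_cases htr : ∀ z ∈ D, ∀ w, α z = some w → w + x = u + z
  · -- translation case
    refine Or.inl (Or.inr ?_)
    refine ⟨(m - x, ((D.erase x).erase m).image (· - x), x, u), ?_, ?_⟩
    · rw [Finset.mem_coe, mem_PT]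
      dsimp only
      have hvg : v + x = u + m := htr m hmD v hv
      refine ⟨⟨by omega, by omega⟩, ?_, ⟨by omega, by omega⟩, ⟨by omega, by omega⟩⟩
      intro s hs
      simp only [Finset.mem_image, Finset.mem_erase] at hs
      obtain ⟨d, ⟨hdm, hdx, hdD⟩, rfl⟩ := hs
      have h1 := hxle d hdD
      have h2 := hmge d hdD
      rw [mem_Icc]
      omega
    · have hDom : domT (m - x) (((D.erase x).erase m).image (· - x)) x = D := by
        ext z
        rw [mem_domT]
        constructor
        · rintro (rfl | rfl | ⟨s, hs, rfl⟩)
          · exact hxD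
          · have : x + (m - x) = m := by omega
            rw [this]; exact hmD
          · simp only [Finset.mem_image, Finset.mem_erase] at hs
            obtain ⟨d, ⟨hdm, hdx, hdD⟩, rfl⟩ := hs
            have h1 := hxle d hdD
            have : d - x + x = d := by omega
            rw [this]; exact hdD
        · intro hzD
          have h1 := hxle z hzD
          have h2 := hmge z hzD
          by_cases hz1 : z = x
          · exact Or.inl hz1
          by_cases hz2 : z = m
          · exact Or.inr (Or.inl (by omega))
          · refine Or.inr (Or.inr ⟨z - x, ?_, by omega⟩)
            simp only [Finset.mem_image, Finset.mem_erase]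
            exact ⟨z, ⟨hz2, hz1, hzD⟩, rfl⟩
      funext z
      unfold encT
      simp only
      rw [hDom]
      by_cases hz : z ∈ D
      · obtain ⟨w, hw⟩ := Option.ne_none_iff_exists'.1 ((hmemD z).1 hz)
        have := htr z hz w hw
        have h1 := hxle z hz
        rw [if_pos hz, hw]
        congr 1
        omega
      · rw [if_neg hz]
        by_contra hne2
        exact hz ((hmemD z).2 (fun h => hne2 h.symm))
  · -- flip case
    push_neg at htr
    obtain ⟨z, hzD, w, hw, hwx⟩ := htr
    have hzx : z ≠ x := by
      rintro rfl
      rw [hu] at hw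
      have := Option.some_inj.1 hw
      omega
    have hxz : x < z := lt_of_le_of_ne (hxle z hzD) (Ne.symm hzx)
    have hpz := pair_pres hPI hp hxz hu hw
    have hflip : w + z = u + x + n := by omega
    have honly : ∀ y ∈ D, y = x ∨ y = z := by
      intro y hyD
      by_contra hy
      push_neg at hy
      obtain ⟨hy1, hy2⟩ := hy
      have hxy : x < y := lt_of_le_of_ne (hxle y hyD) (Ne.symm hy1)
      obtain ⟨wy, hwy⟩ := Option.ne_none_iff_exists'.1 ((hmemD y).1 hyD)
      rcases lt_trichotomy y z with h | h | h
      · have := triple_pres hPI hp hxy h hu hwy hw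
        omega
      · exact hy2 h
      · have := triple_pres hPI hp hxz h hu hw hwy
        omega
    have hbw := hPI.1 z w hw
    refine Or.inr ⟨(z - x, x, u), ?_, ?_⟩
    · rw [Finset.mem_coe, mem_PF]
      dsimp only
      refine ⟨⟨by omega, by omega, ?_⟩, ⟨by omega, by omega⟩, ⟨by omega, by omega⟩⟩
      intro h2a
      omega
    · funext y
      unfold encF
      simp only
      by_cases hy1 : y = x
      · rw [if_pos hy1, hy1, hu]
      rw [if_neg hy1]
      by_cases hy2 : y = x + (z - x)
      · have hyz : y = z := by omega
        rw [if_pos hy2, hyz, hw]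
        congr 1
        omega
      · rw [if_neg hy2]
        by_contra hne2
        have hyD := (hmemD y).2 (fun h => hne2 h.symm)
        rcases honly y hyD with h | h
        · exact hy1 h
        · exact hy2 (by omega)

lemma classify_rev {n : ℕ} {α : ℕ → Option ℕ} (hPI : IsPartialIsometry n α)
    (hp : IsOrderRev α) : α ∈ S0 ∪ S1 n ∪ SA n ∪ SG n := by
  classical
  set D := (Icc 1 n).filter (fun z => α z ≠ none) with hDdef
  have hmemD : ∀ z, z ∈ D ↔ α z ≠ none := classify_setup hPI
  rcases Nat.lt_or_ge D.card 2 with hc | hc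
  · have := classify_small hPI hc
    rcases this with h | h
    · exact Or.inl (Or.inl (Or.inl h))
    · exact Or.inl (Or.inl (Or.inr h))
  have hne : D.Nonempty := Finset.card_pos.1 (by omega)
  set x := D.min' hne with hxdef
  set m := D.max' hne with hmdef
  clear_value x m
  have hxD : x ∈ D := hxdef ▸ Finset.min'_mem D hne
  have hmD : m ∈ D := hmdef ▸ Finset.max'_mem D hne
  have hxm : x < m := hxdef ▸ hmdef ▸ Finset.min'_lt_max'_of_card D (by omega)
  have hxle : ∀ z ∈ D, x ≤ z := fun z hz => hxdef ▸ Finset.min'_le D z hz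
  have hmge : ∀ z ∈ D, z ≤ m := fun z hz => hmdef ▸ Finset.le_max' D z hz
  obtain ⟨u, hu⟩ := Option.ne_none_iff_exists'.1 ((hmemD x).1 hxD)
  obtain ⟨v, hv⟩ := Option.ne_none_iff_exists'.1 ((hmemD m).1 hmD)
  have hbu := hPI.1 x u hu
  have hbv := hPI.1 m v hv
  by_cases htr : ∀ z ∈ D, ∀ w, α z = some w → w + z = v + m
  · -- anti-translation case
    refine Or.inl (Or.inr ?_)
    refine ⟨(m - x, ((D.erase x).erase m).image (· - x), x, v), ?_, ?_⟩
    · rw [Finset.mem_coe, mem_PT]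
      dsimp only
      have hvg : u + x = v + m := htr x hxD u hu
      refine ⟨⟨by omega, by omega⟩, ?_, ⟨by omega, by omega⟩, ⟨by omega, by omega⟩⟩
      intro s hs
      simp only [Finset.mem_image, Finset.mem_erase] at hs
      obtain ⟨d, ⟨hdm, hdx, hdD⟩, rfl⟩ := hs
      have h1 := hxle d hdD
      have h2 := hmge d hdD
      rw [mem_Icc]
      omega
    · have hDom : domT (m - x) (((D.erase x).erase m).image (· - x)) x = D := by
        ext z
        rw [mem_domT]
        constructor
        · rintro (rfl | rfl | ⟨s, hs, rfl⟩)
          · exact hxD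
          · have : x + (m - x) = m := by omega
            rw [this]; exact hmD
          · simp only [Finset.mem_image, Finset.mem_erase] at hs
            obtain ⟨d, ⟨hdm, hdx, hdD⟩, rfl⟩ := hs
            have h1 := hxle d hdD
            have : d - x + x = d := by omega
            rw [this]; exact hdD
        · intro hzD
          have h1 := hxle z hzD
          have h2 := hmge z hzD
          by_cases hz1 : z = x
          · exact Or.inl hz1
          by_cases hz2 : z = m
          · exact Or.inr (Or.inl (by omega))
          · refine Or.inr (Or.inr ⟨z - x, ?_, by omega⟩)
            simp only [Finset.mem_image, Finset.mem_erase]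
            exact ⟨z, ⟨hz2, hz1, hzD⟩, rfl⟩
      funext z
      unfold encA
      simp only
      rw [hDom]
      by_cases hz : z ∈ D
      · obtain ⟨w, hw⟩ := Option.ne_none_iff_exists'.1 ((hmemD z).1 hz)
        have := htr z hz w hw
        have h1 := hxle z hz
        have h2 := hmge z hz
        rw [if_pos hz, hw]
        congr 1
        omega
      · rw [if_neg hz]
        by_contra hne2
        exact hz ((hmemD z).2 (fun h => hne2 h.symm))
  · -- reversing flip case
    push_neg at htr
    obtain ⟨z, hzD, w, hw, hwx⟩ := htr
    have hzm : z ≠ m := by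
      rintro rfl
      rw [hv] at hw
      have := Option.some_inj.1 hw
      omega
    have hzm' : z < m := lt_of_le_of_ne (hmge z hzD) hzm
    have hpz := pair_rev hPI hp hzm' hw hv
    have hflip : w + m = v + z + n := by omega
    have honly : ∀ y ∈ D, y = z ∨ y = m := by
      intro y hyD
      by_contra hy
      push_neg at hy
      obtain ⟨hy1, hy2⟩ := hy
      have hym : y < m := lt_of_le_of_ne (hmge y hyD) hy2
      obtain ⟨wy, hwy⟩ := Option.ne_none_iff_exists'.1 ((hmemD y).1 hyD)
      rcases lt_trichotomy y z with h | h | h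
      · have := triple_rev hPI hp h hzm' hwy hw hv
        omega
      · exact hy1 h
      · have := triple_rev hPI hp h hym hw hwy hv
        omega
    have hzx : z = x := by
      rcases honly x hxD with h | h
      · exact h.symm
      · omega
    have hwu : u = w := by
      rw [hzx, hu] at hw
      exact Option.some_inj.1 hw
    have hbw := hPI.1 m v hv
    refine Or.inr ⟨(m - x, x, v), ?_, ?_⟩
    · rw [Finset.mem_coe, mem_PF]
      dsimp only
      refine ⟨⟨by omega, by omega, fun h2a => by omega⟩, ⟨by omega, by omega⟩,
        ⟨by omega, by omega⟩⟩
    · funext y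
      unfold encG
      simp only
      by_cases hy1 : y = x
      · rw [if_pos hy1, hy1, hu]
        congr 1
        omega
      rw [if_neg hy1]
      by_cases hy2 : y = x + (m - x)
      · have hym : y = m := by omega
        rw [if_pos hy2, hym, hv]
      · rw [if_neg hy2]
        by_contra hne2
        have hyD := (hmemD y).2 (fun h => hne2 h.symm)
        rcases honly y hyD with h | h
        · exact hy1 (by omega)
        · exact hy2 (by omega)


/-! ### Values and domains of encodings -/

lemma encT_ne_none {p : ℕ × Finset ℕ × ℕ × ℕ} {z : ℕ} :
    encT p z ≠ none ↔ z ∈ domT p.1 p.2.1 p.2.2.1 := by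
  unfold encT; split <;> simp_all

lemma encA_ne_none {p : ℕ × Finset ℕ × ℕ × ℕ} {z : ℕ} :
    encA p z ≠ none ↔ z ∈ domT p.1 p.2.1 p.2.2.1 := by
  unfold encA; split <;> simp_all

lemma encF_ne_none {n : ℕ} {p : ℕ × ℕ × ℕ} {z : ℕ} :
    encF n p z ≠ none ↔ z = p.2.1 ∨ z = p.2.1 + p.1 := by
  unfold encF; split
  · simp_all
  · split <;> simp_all

lemma encG_ne_none {n : ℕ} {p : ℕ × ℕ × ℕ} {z : ℕ} :
    encG n p z ≠ none ↔ z = p.2.1 ∨ z = p.2.1 + p.1 := by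
  unfold encG; split
  · simp_all
  · split <;> simp_all

lemma encR_ne_none {p : ℕ × ℕ} {z : ℕ} : encR p z ≠ none ↔ z = p.1 := by
  unfold encR; split <;> simp_all

lemma encT_apply_left (p : ℕ × Finset ℕ × ℕ × ℕ) : encT p p.2.2.1 = some p.2.2.2 := by
  unfold encT
  rw [if_pos (mem_domT.2 (Or.inl rfl))]
  congr 1
  omega

lemma encT_apply_right (p : ℕ × Finset ℕ × ℕ × ℕ) :
    encT p (p.2.2.1 + p.1) = some (p.2.2.2 + p.1) := by
  unfold encT
  rw [if_pos (mem_domT.2 (Or.inr (Or.inl rfl)))]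
  congr 1
  omega

lemma encA_apply_left (p : ℕ × Finset ℕ × ℕ × ℕ) :
    encA p p.2.2.1 = some (p.2.2.2 + p.1) := by
  unfold encA
  rw [if_pos (mem_domT.2 (Or.inl rfl))]
  congr 1
  omega

lemma encA_apply_right (p : ℕ × Finset ℕ × ℕ × ℕ) : encA p (p.2.2.1 + p.1) = some p.2.2.2 := by
  unfold encA
  rw [if_pos (mem_domT.2 (Or.inr (Or.inl rfl)))]
  congr 1
  omega

lemma encF_apply_left {n : ℕ} (p : ℕ × ℕ × ℕ) : encF n p p.2.1 = some p.2.2 := by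
  unfold encF; rw [if_pos rfl]

lemma encF_apply_right {n : ℕ} {p : ℕ × ℕ × ℕ} (ha : 1 ≤ p.1) :
    encF n p (p.2.1 + p.1) = some (p.2.2 + (n - p.1)) := by
  unfold encF
  rw [if_neg (by omega), if_pos rfl]

lemma encG_apply_left {n : ℕ} (p : ℕ × ℕ × ℕ) : encG n p p.2.1 = some (p.2.2 + (n - p.1)) := by
  unfold encG; rw [if_pos rfl]

lemma encG_apply_right {n : ℕ} {p : ℕ × ℕ × ℕ} (ha : 1 ≤ p.1) :
    encG n p (p.2.1 + p.1) = some p.2.2 := by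
  unfold encG
  rw [if_neg (by omega), if_pos rfl]

/-! ### domT extensionality -/

lemma domT_ext {g x g' x' : ℕ} {S S' : Finset ℕ}
    (hS : S ⊆ Icc 1 (g-1)) (hS' : S' ⊆ Icc 1 (g'-1)) (hg : 1 ≤ g) (hg' : 1 ≤ g')
    (h : domT g S x = domT g' S' x') : x = x' ∧ g = g' ∧ S = S' := by
  have hx : x ∈ domT g' S' x' := h ▸ mem_domT.2 (Or.inl rfl)
  have hx' : x' ∈ domT g S x := h.symm ▸ mem_domT.2 (Or.inl rfl)
  have hxg : x + g ∈ domT g' S' x' := h ▸ mem_domT.2 (Or.inr (Or.inl rfl))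
  have hxg' : x' + g' ∈ domT g S x := h.symm ▸ mem_domT.2 (Or.inr (Or.inl rfl))
  have b1 := domT_bounds hS' hx
  have b2 := domT_bounds hS hx'
  have b3 := domT_bounds hS' hxg
  have b4 := domT_bounds hS hxg'
  have hxx : x = x' := by omega
  have hgg : g = g' := by omega
  subst hxx hgg
  refine ⟨rfl, rfl, ?_⟩
  ext s
  constructor
  · intro hs
    have hb := mem_Icc.1 (hS hs)
    have : s + x ∈ domT g S' x := h ▸ mem_domT.2 (Or.inr (Or.inr ⟨s, hs, rfl⟩))
    rcases mem_domT.1 this with h1 | h1 | ⟨s', hs', h1⟩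
    · omega
    · omega
    · have : s' = s := by omega
      exact this ▸ hs'
  · intro hs
    have hb := mem_Icc.1 (hS' hs)
    have : s + x ∈ domT g S x := h.symm ▸ mem_domT.2 (Or.inr (Or.inr ⟨s, hs, rfl⟩))
    rcases mem_domT.1 this with h1 | h1 | ⟨s', hs', h1⟩
    · omega
    · omega
    · have : s' = s := by omega
      exact this ▸ hs'


/-! ### Injectivity of the encodings -/

lemma encR_injOn {n : ℕ} : Set.InjOn encR ↑(Icc 1 n ×ˢ Icc 1 n) := by
  intro p _ q _ h
  have h1 : encR p p.1 = some p.2 := by unfold encR; rw [if_pos rfl]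
  rw [h, encR_eq_some] at h1
  exact Prod.ext h1.1 h1.2

lemma dom_eq_of_TT {p q : ℕ × Finset ℕ × ℕ × ℕ} (h : encT p = encT q) :
    domT p.1 p.2.1 p.2.2.1 = domT q.1 q.2.1 q.2.2.1 := by
  ext z
  rw [← encT_ne_none, ← encT_ne_none, h]

lemma dom_eq_of_AA {p q : ℕ × Finset ℕ × ℕ × ℕ} (h : encA p = encA q) :
    domT p.1 p.2.1 p.2.2.1 = domT q.1 q.2.1 q.2.2.1 := by
  ext z
  rw [← encA_ne_none, ← encA_ne_none, h]

lemma dom_eq_of_TA {p q : ℕ × Finset ℕ × ℕ × ℕ} (h : encT p = encA q) :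
    domT p.1 p.2.1 p.2.2.1 = domT q.1 q.2.1 q.2.2.1 := by
  ext z
  rw [← encT_ne_none, ← encA_ne_none, h]

lemma encT_injOn {n : ℕ} : Set.InjOn encT ↑(PT n) := by
  intro p hp q hq h
  obtain ⟨⟨hg1, _⟩, hS, _, _⟩ := mem_PT.1 (Finset.mem_coe.1 hp)
  obtain ⟨⟨hg1', _⟩, hS', _, _⟩ := mem_PT.1 (Finset.mem_coe.1 hq)
  obtain ⟨hx, hg, hSS⟩ := domT_ext hS hS' hg1 hg1' (dom_eq_of_TT h)
  have h1 := encT_apply_left p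
  rw [h, hx, encT_apply_left q] at h1
  obtain ⟨g, S, x, u⟩ := p
  obtain ⟨g', S', x', u'⟩ := q
  dsimp only at hx hg hSS h1
  rw [hx, hg, hSS, Option.some_inj.1 h1]

lemma encA_injOn {n : ℕ} : Set.InjOn encA ↑(PT n) := by
  intro p hp q hq h
  obtain ⟨⟨hg1, _⟩, hS, _, _⟩ := mem_PT.1 (Finset.mem_coe.1 hp)
  obtain ⟨⟨hg1', _⟩, hS', _, _⟩ := mem_PT.1 (Finset.mem_coe.1 hq)
  obtain ⟨hx, hg, hSS⟩ := domT_ext hS hS' hg1 hg1' (dom_eq_of_AA h)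
  have h1 := encA_apply_right p
  rw [h, hx, hg, encA_apply_right q] at h1
  obtain ⟨g, S, x, u⟩ := p
  obtain ⟨g', S', x', u'⟩ := q
  dsimp only at hx hg hSS h1
  rw [hx, hg, hSS, Option.some_inj.1 h1]

lemma encF_injOn {n : ℕ} : Set.InjOn (encF n) ↑(PF n) := by
  intro p hp q hq h
  obtain ⟨⟨ha1, _, _⟩, _, _⟩ := mem_PF.1 (Finset.mem_coe.1 hp)
  obtain ⟨⟨ha1', _, _⟩, _, _⟩ := mem_PF.1 (Finset.mem_coe.1 hq)
  have hdom : ∀ z, (z = p.2.1 ∨ z = p.2.1 + p.1) ↔ (z = q.2.1 ∨ z = q.2.1 + q.1) := by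
    intro z
    rw [← encF_ne_none (n := n), ← encF_ne_none (n := n), h]
  have e1 := (hdom p.2.1).1 (Or.inl rfl)
  have e2 := (hdom (p.2.1 + p.1)).1 (Or.inr rfl)
  have e3 := (hdom q.2.1).2 (Or.inl rfl)
  have e4 := (hdom (q.2.1 + q.1)).2 (Or.inr rfl)
  have hx : p.2.1 = q.2.1 := by omega
  have ha : p.1 = q.1 := by omega
  have h1 := encF_apply_left (n := n) p
  rw [h, hx, encF_apply_left q] at h1
  obtain ⟨a, x, u⟩ := p
  obtain ⟨a', x', u'⟩ := q
  dsimp only at hx ha h1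
  rw [hx, ha, Option.some_inj.1 h1]

lemma encG_injOn {n : ℕ} : Set.InjOn (encG n) ↑(PF n) := by
  intro p hp q hq h
  obtain ⟨⟨ha1, _, _⟩, _, _⟩ := mem_PF.1 (Finset.mem_coe.1 hp)
  obtain ⟨⟨ha1', _, _⟩, _, _⟩ := mem_PF.1 (Finset.mem_coe.1 hq)
  have hdom : ∀ z, (z = p.2.1 ∨ z = p.2.1 + p.1) ↔ (z = q.2.1 ∨ z = q.2.1 + q.1) := by
    intro z
    rw [← encG_ne_none (n := n), ← encG_ne_none (n := n), h]
  have e1 := (hdom p.2.1).1 (Or.inl rfl)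
  have e2 := (hdom (p.2.1 + p.1)).1 (Or.inr rfl)
  have e3 := (hdom q.2.1).2 (Or.inl rfl)
  have e4 := (hdom (q.2.1 + q.1)).2 (Or.inr rfl)
  have hx : p.2.1 = q.2.1 := by omega
  have ha : p.1 = q.1 := by omega
  have h1 := encG_apply_right (n := n) ha1
  rw [h, hx, ha, encG_apply_right ha1'] at h1
  obtain ⟨a, x, u⟩ := p
  obtain ⟨a', x', u'⟩ := q
  dsimp only at hx ha h1
  rw [hx, ha, Option.some_inj.1 h1]


/-! ### Disjointness of the families -/

lemma D01 {n : ℕ} : Disjoint S0 (S1 n) := by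
  rw [Set.disjoint_left]
  rintro a ha ⟨p, hp, rfl⟩
  rw [S0, Set.mem_singleton_iff] at ha
  have := congrFun ha p.1
  unfold encR enc0 at this
  simp at this

lemma D0T {n : ℕ} : Disjoint S0 (ST n) := by
  rw [Set.disjoint_left]
  rintro a ha ⟨p, hp, rfl⟩
  rw [S0, Set.mem_singleton_iff] at ha
  have := encT_apply_left p
  rw [ha] at this
  unfold enc0 at this
  simp at this

lemma D0A {n : ℕ} : Disjoint S0 (SA n) := by
  rw [Set.disjoint_left]
  rintro a ha ⟨p, hp, rfl⟩
  rw [S0, Set.mem_singleton_iff] at ha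
  have := encA_apply_left p
  rw [ha] at this
  unfold enc0 at this
  simp at this

lemma D0F {n : ℕ} : Disjoint S0 (SF n) := by
  rw [Set.disjoint_left]
  rintro a ha ⟨p, hp, rfl⟩
  rw [S0, Set.mem_singleton_iff] at ha
  have := encF_apply_left (n := n) p
  rw [ha] at this
  unfold enc0 at this
  simp at this

lemma D0G {n : ℕ} : Disjoint S0 (SG n) := by
  rw [Set.disjoint_left]
  rintro a ha ⟨p, hp, rfl⟩
  rw [S0, Set.mem_singleton_iff] at ha
  have := encG_apply_left (n := n) p
  rw [ha] at this
  unfold enc0 at this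
  simp at this

lemma D1T {n : ℕ} : Disjoint (S1 n) (ST n) := by
  rw [Set.disjoint_left]
  rintro a ⟨p, hp, rfl⟩ ⟨q, hq, hqe⟩
  obtain ⟨⟨hg1, _⟩, _, _, _⟩ := mem_PT.1 (Finset.mem_coe.1 hq)
  have c1 : encR p q.2.2.1 ≠ none := by rw [← hqe, encT_apply_left]; simp
  have c2 : encR p (q.2.2.1 + q.1) ≠ none := by rw [← hqe, encT_apply_right]; simp
  rw [encR_ne_none] at c1 c2
  omega

lemma D1A {n : ℕ} : Disjoint (S1 n) (SA n) := by
  rw [Set.disjoint_left]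
  rintro a ⟨p, hp, rfl⟩ ⟨q, hq, hqe⟩
  obtain ⟨⟨hg1, _⟩, _, _, _⟩ := mem_PT.1 (Finset.mem_coe.1 hq)
  have c1 : encR p q.2.2.1 ≠ none := by rw [← hqe, encA_apply_left]; simp
  have c2 : encR p (q.2.2.1 + q.1) ≠ none := by rw [← hqe, encA_apply_right]; simp
  rw [encR_ne_none] at c1 c2
  omega

lemma D1F {n : ℕ} : Disjoint (S1 n) (SF n) := by
  rw [Set.disjoint_left]
  rintro a ⟨p, hp, rfl⟩ ⟨q, hq, hqe⟩
  obtain ⟨⟨ha1, _, _⟩, _, _⟩ := mem_PF.1 (Finset.mem_coe.1 hq)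
  have c1 : encR p q.2.1 ≠ none := by rw [← hqe, encF_apply_left]; simp
  have c2 : encR p (q.2.1 + q.1) ≠ none := by rw [← hqe, encF_apply_right ha1]; simp
  rw [encR_ne_none] at c1 c2
  omega

lemma D1G {n : ℕ} : Disjoint (S1 n) (SG n) := by
  rw [Set.disjoint_left]
  rintro a ⟨p, hp, rfl⟩ ⟨q, hq, hqe⟩
  obtain ⟨⟨ha1, _, _⟩, _, _⟩ := mem_PF.1 (Finset.mem_coe.1 hq)
  have c1 : encR p q.2.1 ≠ none := by rw [← hqe, encG_apply_left]; simp
  have c2 : encR p (q.2.1 + q.1) ≠ none := by rw [← hqe, encG_apply_right ha1]; simp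
  rw [encR_ne_none] at c1 c2
  omega

lemma DTA {n : ℕ} : Disjoint (ST n) (SA n) := by
  rw [Set.disjoint_left]
  rintro a ⟨p, hp, rfl⟩ ⟨q, hq, hqe⟩
  obtain ⟨⟨hg1, _⟩, hS, _, _⟩ := mem_PT.1 (Finset.mem_coe.1 hp)
  obtain ⟨⟨hg1', _⟩, hS', _, _⟩ := mem_PT.1 (Finset.mem_coe.1 hq)
  obtain ⟨hx, hg, _⟩ := domT_ext hS hS' hg1 hg1' (dom_eq_of_TA hqe.symm)
  have v1 := encT_apply_left p
  rw [hqe.symm, hx, encA_apply_left q] at v1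
  have v2 := encT_apply_right p
  rw [hqe.symm, hx, hg, encA_apply_right q] at v2
  have e1 := Option.some_inj.1 v1
  have e2 := Option.some_inj.1 v2
  omega

lemma DTF {n : ℕ} : Disjoint (ST n) (SF n) := by
  rw [Set.disjoint_left]
  rintro a ⟨p, hp, rfl⟩ ⟨q, hq, hqe⟩
  obtain ⟨⟨hg1, hg2⟩, hS, _, _⟩ := mem_PT.1 (Finset.mem_coe.1 hp)
  obtain ⟨⟨ha1, ha2, ha3⟩, _, _⟩ := mem_PF.1 (Finset.mem_coe.1 hq)
  have hdom : ∀ z, z ∈ domT p.1 p.2.1 p.2.2.1 ↔ (z = q.2.1 ∨ z = q.2.1 + q.1) := by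
    intro z
    rw [← encT_ne_none, hqe.symm, encF_ne_none]
  have c1 := (hdom p.2.2.1).1 (mem_domT.2 (Or.inl rfl))
  have c2 := (hdom (p.2.2.1 + p.1)).1 (mem_domT.2 (Or.inr (Or.inl rfl)))
  have c3 := domT_bounds hS ((hdom q.2.1).2 (Or.inl rfl))
  have c4 := domT_bounds hS ((hdom (q.2.1 + q.1)).2 (Or.inr rfl))
  have hx : p.2.2.1 = q.2.1 := by omega
  have hg : p.1 = q.1 := by omega
  have v1 := encT_apply_left p
  rw [hqe.symm, hx, encF_apply_left q] at v1
  have v2 := encT_apply_right p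
  rw [hqe.symm, hx, hg, encF_apply_right ha1] at v2
  have e1 := Option.some_inj.1 v1
  have e2 := Option.some_inj.1 v2
  omega

lemma DTG {n : ℕ} : Disjoint (ST n) (SG n) := by
  rw [Set.disjoint_left]
  rintro a ⟨p, hp, rfl⟩ ⟨q, hq, hqe⟩
  obtain ⟨⟨hg1, hg2⟩, hS, _, _⟩ := mem_PT.1 (Finset.mem_coe.1 hp)
  obtain ⟨⟨ha1, ha2, ha3⟩, _, _⟩ := mem_PF.1 (Finset.mem_coe.1 hq)
  have hdom : ∀ z, z ∈ domT p.1 p.2.1 p.2.2.1 ↔ (z = q.2.1 ∨ z = q.2.1 + q.1) := by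
    intro z
    rw [← encT_ne_none, hqe.symm, encG_ne_none]
  have c1 := (hdom p.2.2.1).1 (mem_domT.2 (Or.inl rfl))
  have c2 := (hdom (p.2.2.1 + p.1)).1 (mem_domT.2 (Or.inr (Or.inl rfl)))
  have c3 := domT_bounds hS ((hdom q.2.1).2 (Or.inl rfl))
  have c4 := domT_bounds hS ((hdom (q.2.1 + q.1)).2 (Or.inr rfl))
  have hx : p.2.2.1 = q.2.1 := by omega
  have hg : p.1 = q.1 := by omega
  have v1 := encT_apply_left p
  rw [hqe.symm, hx, encG_apply_left q] at v1
  have v2 := encT_apply_right p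
  rw [hqe.symm, hx, hg, encG_apply_right ha1] at v2
  have e1 := Option.some_inj.1 v1
  have e2 := Option.some_inj.1 v2
  omega

lemma DFA {n : ℕ} : Disjoint (SF n) (SA n) := by
  rw [Set.disjoint_left]
  rintro a ⟨p, hp, rfl⟩ ⟨q, hq, hqe⟩
  obtain ⟨⟨ha1, ha2, ha3⟩, _, _⟩ := mem_PF.1 (Finset.mem_coe.1 hp)
  obtain ⟨⟨hg1, hg2⟩, hS, _, _⟩ := mem_PT.1 (Finset.mem_coe.1 hq)
  have hdom : ∀ z, z ∈ domT q.1 q.2.1 q.2.2.1 ↔ (z = p.2.1 ∨ z = p.2.1 + p.1) := by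
    intro z
    rw [← encA_ne_none, hqe, encF_ne_none]
  have c1 := (hdom q.2.2.1).1 (mem_domT.2 (Or.inl rfl))
  have c2 := (hdom (q.2.2.1 + q.1)).1 (mem_domT.2 (Or.inr (Or.inl rfl)))
  have c3 := domT_bounds hS ((hdom p.2.1).2 (Or.inl rfl))
  have c4 := domT_bounds hS ((hdom (p.2.1 + p.1)).2 (Or.inr rfl))
  have hx : q.2.2.1 = p.2.1 := by omega
  have hg : q.1 = p.1 := by omega
  have v1 := encA_apply_left q
  rw [hqe, hx, encF_apply_left p] at v1
  have v2 := encA_apply_right q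
  rw [hqe, hx, hg, encF_apply_right ha1] at v2
  have e1 := Option.some_inj.1 v1
  have e2 := Option.some_inj.1 v2
  omega

lemma DAG {n : ℕ} : Disjoint (SA n) (SG n) := by
  rw [Set.disjoint_left]
  rintro a ⟨p, hp, rfl⟩ ⟨q, hq, hqe⟩
  obtain ⟨⟨hg1, hg2⟩, hS, _, _⟩ := mem_PT.1 (Finset.mem_coe.1 hp)
  obtain ⟨⟨ha1, ha2, ha3⟩, _, _⟩ := mem_PF.1 (Finset.mem_coe.1 hq)
  have hdom : ∀ z, z ∈ domT p.1 p.2.1 p.2.2.1 ↔ (z = q.2.1 ∨ z = q.2.1 + q.1) := by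
    intro z
    rw [← encA_ne_none, hqe.symm, encG_ne_none]
  have c1 := (hdom p.2.2.1).1 (mem_domT.2 (Or.inl rfl))
  have c2 := (hdom (p.2.2.1 + p.1)).1 (mem_domT.2 (Or.inr (Or.inl rfl)))
  have c3 := domT_bounds hS ((hdom q.2.1).2 (Or.inl rfl))
  have c4 := domT_bounds hS ((hdom (q.2.1 + q.1)).2 (Or.inr rfl))
  have hx : p.2.2.1 = q.2.1 := by omega
  have hg : p.1 = q.1 := by omega
  have v1 := encA_apply_left p
  rw [hqe.symm, hx, encG_apply_left q] at v1
  have v2 := encA_apply_right p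
  rw [hqe.symm, hx, hg, encG_apply_right ha1] at v2
  have e1 := Option.some_inj.1 v1
  have e2 := Option.some_inj.1 v2
  omega

lemma DFG {n : ℕ} : Disjoint (SF n) (SG n) := by
  rw [Set.disjoint_left]
  rintro a ⟨p, hp, rfl⟩ ⟨q, hq, hqe⟩
  obtain ⟨⟨ha1, ha2, ha3⟩, _, _⟩ := mem_PF.1 (Finset.mem_coe.1 hp)
  obtain ⟨⟨hb1, hb2, hb3⟩, _, _⟩ := mem_PF.1 (Finset.mem_coe.1 hq)
  have hdom : ∀ z, (z = p.2.1 ∨ z = p.2.1 + p.1) ↔ (z = q.2.1 ∨ z = q.2.1 + q.1) := by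
    intro z
    rw [← encF_ne_none (n := n), hqe.symm, encG_ne_none]
  have c1 := (hdom p.2.1).1 (Or.inl rfl)
  have c2 := (hdom (p.2.1 + p.1)).1 (Or.inr rfl)
  have c3 := (hdom q.2.1).2 (Or.inl rfl)
  have c4 := (hdom (q.2.1 + q.1)).2 (Or.inr rfl)
  have hx : p.2.1 = q.2.1 := by omega
  have hg : p.1 = q.1 := by omega
  have v1 := encF_apply_left (n := n) p
  rw [hqe.symm, hx, encG_apply_left q] at v1
  have v2 := encF_apply_right (n := n) ha1
  rw [hqe.symm, hx, hg, encG_apply_right hb1] at v2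
  have e1 := Option.some_inj.1 v1
  have e2 := Option.some_inj.1 v2
  omega


/-! ### Set equalities -/

lemma ODI_eq (n : ℕ) :
    {α : ℕ → Option ℕ | IsPartialIsometry n α ∧ IsOrderPres α} =
      S0 ∪ S1 n ∪ ST n ∪ SF n := by
  apply Set.eq_of_subset_of_subset
  · rintro α ⟨h1, h2⟩
    exact classify_pres h1 h2
  · rintro α (((h | h) | h) | h)
    · rw [S0, Set.mem_singleton_iff] at h
      subst h
      exact ⟨(enc0_PI n).1, (enc0_PI n).2.1⟩
    · obtain ⟨p, hp, rfl⟩ := h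
      exact ⟨(encR_PI (Finset.mem_coe.1 hp)).1, (encR_PI (Finset.mem_coe.1 hp)).2.1⟩
    · obtain ⟨p, hp, rfl⟩ := h
      exact ⟨(encT_PI (Finset.mem_coe.1 hp)).1, (encT_PI (Finset.mem_coe.1 hp)).2⟩
    · obtain ⟨p, hp, rfl⟩ := h
      exact ⟨(encF_PI (Finset.mem_coe.1 hp)).1, (encF_PI (Finset.mem_coe.1 hp)).2⟩

lemma MDI_eq (n : ℕ) :
    {α : ℕ → Option ℕ | IsPartialIsometry n α ∧ (IsOrderPres α ∨ IsOrderRev α)} =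
      S0 ∪ S1 n ∪ ST n ∪ SF n ∪ SA n ∪ SG n := by
  apply Set.eq_of_subset_of_subset
  · rintro α ⟨h1, h2 | h2⟩
    · have := classify_pres h1 h2
      exact Or.inl (Or.inl this)
    · have := classify_rev h1 h2
      rcases this with ((h | h) | h) | h
      · exact Or.inl (Or.inl (Or.inl (Or.inl (Or.inl h))))
      · exact Or.inl (Or.inl (Or.inl (Or.inl (Or.inr h))))
      · exact Or.inl (Or.inr h)
      · exact Or.inr h
  · rintro α ((((((h | h) | h) | h) | h) | h))
    · rw [S0, Set.mem_singleton_iff] at h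
      subst h
      exact ⟨(enc0_PI n).1, Or.inl (enc0_PI n).2.1⟩
    · obtain ⟨p, hp, rfl⟩ := h
      exact ⟨(encR_PI (Finset.mem_coe.1 hp)).1, Or.inl (encR_PI (Finset.mem_coe.1 hp)).2.1⟩
    · obtain ⟨p, hp, rfl⟩ := h
      exact ⟨(encT_PI (Finset.mem_coe.1 hp)).1, Or.inl (encT_PI (Finset.mem_coe.1 hp)).2⟩
    · obtain ⟨p, hp, rfl⟩ := h
      exact ⟨(encF_PI (Finset.mem_coe.1 hp)).1, Or.inl (encF_PI (Finset.mem_coe.1 hp)).2⟩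
    · obtain ⟨p, hp, rfl⟩ := h
      exact ⟨(encA_PI (Finset.mem_coe.1 hp)).1, Or.inr (encA_PI (Finset.mem_coe.1 hp)).2⟩
    · obtain ⟨p, hp, rfl⟩ := h
      exact ⟨(encG_PI (Finset.mem_coe.1 hp)).1, Or.inr (encG_PI (Finset.mem_coe.1 hp)).2⟩

/-! ### Cardinalities -/

lemma fin0 : S0.Finite := Set.finite_singleton _
lemma fin1 (n : ℕ) : (S1 n).Finite := ((Icc 1 n ×ˢ Icc 1 n).finite_toSet).image _
lemma finT (n : ℕ) : (ST n).Finite := ((PT n).finite_toSet).image _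
lemma finA (n : ℕ) : (SA n).Finite := ((PT n).finite_toSet).image _
lemma finF (n : ℕ) : (SF n).Finite := ((PF n).finite_toSet).image _
lemma finG (n : ℕ) : (SG n).Finite := ((PF n).finite_toSet).image _

lemma ncard_S0 : S0.ncard = 1 := Set.ncard_singleton _

lemma ncard_S1 (n : ℕ) : (S1 n).ncard = n * n := by
  rw [S1, Set.ncard_image_of_injOn encR_injOn, Set.ncard_coe_finset,
    Finset.card_product, Nat.card_Icc]
  norm_num

lemma ncard_ST (n : ℕ) : (ST n).ncard = (PT n).card := by
  rw [ST, Set.ncard_image_of_injOn encT_injOn, Set.ncard_coe_finset]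

lemma ncard_SA (n : ℕ) : (SA n).ncard = (PT n).card := by
  rw [SA, Set.ncard_image_of_injOn encA_injOn, Set.ncard_coe_finset]

lemma ncard_SF (n : ℕ) : (SF n).ncard = (PF n).card := by
  rw [SF, Set.ncard_image_of_injOn encF_injOn, Set.ncard_coe_finset]

lemma ncard_SG (n : ℕ) : (SG n).ncard = (PF n).card := by
  rw [SG, Set.ncard_image_of_injOn encG_injOn, Set.ncard_coe_finset]

lemma card_PT (n : ℕ) : (PT n).card = ∑ g ∈ Icc 1 (n-1), 2^(g-1) * ((n-g) * (n-g)) := by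
  rw [PT, Finset.card_biUnion]
  · refine Finset.sum_congr rfl fun g _ => ?_
    simp [Finset.card_product, Finset.card_powerset, Nat.card_Icc]
  · intro a _ b _ hab
    simp only [Finset.disjoint_left]
    intro p hp hq
    rw [Finset.mem_product] at hp hq
    have h1 := Finset.mem_singleton.1 hp.1
    have h2 := Finset.mem_singleton.1 hq.1
    exact hab (h1 ▸ h2 ▸ rfl)

lemma card_PF (n : ℕ) :
    (PF n).card = ∑ a ∈ (Icc 1 (n-1)).filter (fun a => 2*a ≠ n), ((n-a) * a) := by
  rw [PF, Finset.card_biUnion]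
  · refine Finset.sum_congr rfl fun g _ => ?_
    simp [Finset.card_product, Nat.card_Icc]
  · intro a _ b _ hab
    simp only [Finset.disjoint_left]
    intro p hp hq
    rw [Finset.mem_product] at hp hq
    have h1 := Finset.mem_singleton.1 hp.1
    have h2 := Finset.mem_singleton.1 hq.1
    exact hab (h1 ▸ h2 ▸ rfl)

lemma ncard_ODI (n : ℕ) :
    {α : ℕ → Option ℕ | IsPartialIsometry n α ∧ IsOrderPres α}.ncard =
      1 + n * n + (PT n).card + (PF n).card := by
  rw [ODI_eq]
  rw [Set.ncard_union_eq
      (Set.disjoint_union_left.2 ⟨Set.disjoint_union_left.2 ⟨D0F, D1F⟩, DTF⟩)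
      ((fin0.union (fin1 n)).union (finT n)) (finF n),
    Set.ncard_union_eq (Set.disjoint_union_left.2 ⟨D0T, D1T⟩) (fin0.union (fin1 n)) (finT n),
    Set.ncard_union_eq D01 fin0 (fin1 n),
    ncard_S0, ncard_S1, ncard_ST, ncard_SF]

lemma ncard_MDI (n : ℕ) :
    {α : ℕ → Option ℕ | IsPartialIsometry n α ∧ (IsOrderPres α ∨ IsOrderRev α)}.ncard =
      1 + n * n + (PT n).card + (PF n).card + (PT n).card + (PF n).card := by
  rw [MDI_eq]
  have f4 : (S0 ∪ S1 n ∪ ST n ∪ SF n).Finite :=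
    ((fin0.union (fin1 n)).union (finT n)).union (finF n)
  rw [Set.ncard_union_eq
      (Set.disjoint_union_left.2
        ⟨Set.disjoint_union_left.2
          ⟨Set.disjoint_union_left.2 ⟨Set.disjoint_union_left.2 ⟨D0G, D1G⟩, DTG⟩, DFG⟩, DAG⟩)
      (f4.union (finA n)) (finG n),
    Set.ncard_union_eq
      (Set.disjoint_union_left.2
        ⟨Set.disjoint_union_left.2 ⟨Set.disjoint_union_left.2 ⟨D0A, D1A⟩, DTA⟩, DFA⟩)
      f4 (finA n),
    Set.ncard_union_eq
      (Set.disjoint_union_left.2 ⟨Set.disjoint_union_left.2 ⟨D0F, D1F⟩, DTF⟩)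
      ((fin0.union (fin1 n)).union (finT n)) (finF n),
    Set.ncard_union_eq (Set.disjoint_union_left.2 ⟨D0T, D1T⟩) (fin0.union (fin1 n)) (finT n),
    Set.ncard_union_eq D01 fin0 (fin1 n),
    ncard_S0, ncard_S1, ncard_ST, ncard_SF, ncard_SA, ncard_SG]


/-! ### Summation identities -/

lemma sumGauss (m : ℕ) : 2 * ∑ a ∈ Icc 1 m, (a:ℤ) = m*(m+1) := by
  induction m with
  | zero => simp
  | succ k ih =>
    rw [Finset.sum_Icc_succ_top (by omega)]
    push_cast
    push_cast at ih
    linarith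

lemma sumC (m : ℕ) : ∑ g ∈ Icc 1 m, (2:ℤ)^(g-1) = 2^m - 1 := by
  induction m with
  | zero => simp
  | succ k ih =>
    rw [Finset.sum_Icc_succ_top (by omega), ih]
    simp only [Nat.add_sub_cancel]
    have h1 : (2:ℤ)^(k+1) = 2*2^k := by ring
    linarith

lemma sumB (m : ℕ) : ∑ g ∈ Icc 1 m, (2:ℤ)^(g-1) * ((m:ℤ)+1-g) = 2^(m+1) - (m+2) := by
  induction m with
  | zero => norm_num
  | succ k ih =>
    rw [Finset.sum_Icc_succ_top (by omega)]
    have hsplit : ∀ g ∈ Icc 1 k,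
        (2:ℤ)^(g-1) * ((k:ℤ)+1+1-g) = 2^(g-1) * ((k:ℤ)+1-g) + 2^(g-1) := by
      intro g hg
      ring
    push_cast
    rw [Finset.sum_congr rfl hsplit, Finset.sum_add_distrib, ih, sumC k]
    ring_nf

lemma sumA (m : ℕ) :
    ∑ g ∈ Icc 1 m, (2:ℤ)^(g-1) * (((m:ℤ)+1-g) * ((m:ℤ)+1-g)) =
      3*2^(m+1) - ((m:ℤ)^2 + 4*m + 6) := by
  induction m with
  | zero => norm_num
  | succ k ih =>
    rw [Finset.sum_Icc_succ_top (by omega)]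
    have hsplit : ∀ g ∈ Icc 1 k,
        (2:ℤ)^(g-1) * (((k:ℤ)+1+1-g) * ((k:ℤ)+1+1-g)) =
          2^(g-1) * (((k:ℤ)+1-g) * ((k:ℤ)+1-g)) + 2 * (2^(g-1) * ((k:ℤ)+1-g)) + 2^(g-1) := by
      intro g hg
      ring
    push_cast
    rw [Finset.sum_congr rfl hsplit, Finset.sum_add_distrib, Finset.sum_add_distrib,
      ← Finset.mul_sum, ih, sumB k, sumC k]
    ring_nf

lemma sumF (m : ℕ) : 6 * ∑ a ∈ Icc 1 m, (((m:ℤ)+1-a) * a) = (m:ℤ)*((m:ℤ)+1)*((m:ℤ)+2) := by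
  induction m with
  | zero => simp
  | succ k ih =>
    rw [Finset.sum_Icc_succ_top (by omega)]
    have hsplit : ∀ a ∈ Icc 1 k,
        (((k:ℤ)+1+1-a) * a) = (((k:ℤ)+1-a) * a) + a := by
      intro a ha
      ring
    push_cast
    rw [Finset.sum_congr rfl hsplit, Finset.sum_add_distrib]
    have hg := sumGauss k
    ring_nf
    ring_nf at ih hg
    linarith


/-! ### Cast bridges -/

lemma castPT {n : ℕ} (hn : 1 ≤ n) :
    ((PT n).card : ℤ) = 3*2^n - ((n:ℤ)^2 + 2*(n:ℤ) + 3) := by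
  obtain ⟨m, rfl⟩ : ∃ m, n = m + 1 := ⟨n-1, by omega⟩
  rw [card_PT]
  simp only [Nat.add_sub_cancel]
  rw [Nat.cast_sum]
  have hcongr : ∀ g ∈ Icc 1 m,
      ((2^(g-1) * (((m+1)-g) * ((m+1)-g)) : ℕ) : ℤ) =
        (2:ℤ)^(g-1) * (((m:ℤ)+1-g) * ((m:ℤ)+1-g)) := by
    intro g hg
    have hgm := mem_Icc.1 hg
    push_cast [Nat.cast_sub (show g ≤ m+1 by omega)]
    ring
  rw [Finset.sum_congr rfl hcongr, sumA m]
  push_cast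
  ring

lemma castFull {n : ℕ} (hn : 1 ≤ n) :
    6 * ((∑ a ∈ Icc 1 (n-1), (n-a) * a : ℕ) : ℤ) = (n:ℤ)^3 - n := by
  obtain ⟨m, rfl⟩ : ∃ m, n = m + 1 := ⟨n-1, by omega⟩
  simp only [Nat.add_sub_cancel]
  rw [Nat.cast_sum]
  have hcongr : ∀ a ∈ Icc 1 m,
      (((m+1-a) * a : ℕ) : ℤ) = ((m:ℤ)+1-a) * a := by
    intro a ha
    have ham := mem_Icc.1 ha
    push_cast [Nat.cast_sub (show a ≤ m+1 by omega)]
    ring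
  rw [Finset.sum_congr rfl hcongr, sumF m]
  push_cast
  ring

lemma card_PF_odd {n : ℕ} (hn : Odd n) :
    (PF n).card = ∑ a ∈ Icc 1 (n-1), (n-a) * a := by
  rw [card_PF]
  congr 1
  apply Finset.filter_true_of_mem
  intro a _
  obtain ⟨t, rfl⟩ := hn
  omega

lemma card_PF_even {k n : ℕ} (hk : 1 ≤ k) (hn : n = 2*k) :
    (PF n).card + k*k = ∑ a ∈ Icc 1 (n-1), (n-a) * a := by
  classical
  rw [card_PF]
  have hsum := Finset.sum_filter_add_sum_filter_not (Icc 1 (n-1))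
    (fun a => 2*a ≠ n) (fun a => (n-a) * a)
  have hone : (Icc 1 (n-1)).filter (fun a => ¬ 2*a ≠ n) = {k} := by
    ext a
    simp only [Finset.mem_filter, mem_Icc, Finset.mem_singleton, not_not]
    omega
  rw [hone, Finset.sum_singleton] at hsum
  have : (n - k) * k = k * k := by
    congr 1
    omega
  omega

end Cyc

theorem stmt17 (n : ℕ) (hn : 3 ≤ n) :
    (({α : ℕ → Option ℕ | IsPartialIsometry n α ∧ (IsOrderPres α ∨ IsOrderRev α)}.ncard : ℤ)) =
      2 * ({α : ℕ → Option ℕ | IsPartialIsometry n α ∧ IsOrderPres α}.ncard : ℤ) -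
        (n : ℤ) ^ 2 - 1 ∧
    (({α : ℕ → Option ℕ | IsPartialIsometry n α ∧ (IsOrderPres α ∨ IsOrderRev α)}.ncard : ℤ)) =
      3 * 2 ^ (n + 1) + ((n : ℤ) + 1) * n * (n - 1) / 3 -
        (5 + (-1) ^ n) * (n : ℤ) ^ 2 / 4 - 4 * n - 5 := by
  have hMDI := Cyc.ncard_MDI n
  have hODI := Cyc.ncard_ODI n
  constructor
  · rw [hMDI, hODI]
    push_cast
    ring
  · rw [hMDI]
    have hPT : ((Cyc.PT n).card : ℤ) = 3*2^n - ((n:ℤ)^2 + 2*(n:ℤ) + 3) := Cyc.castPT (by omega)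
    have hFz : 6 * ((∑ a ∈ Finset.Icc 1 (n-1), (n-a) * a : ℕ) : ℤ) = (n:ℤ)^3 - n :=
      Cyc.castFull (by omega)
    have hd1 : ((n:ℤ)+1) * (n:ℤ) * ((n:ℤ)-1) / 3 =
        2 * ((∑ a ∈ Finset.Icc 1 (n-1), (n-a) * a : ℕ) : ℤ) := by
      rw [show ((n:ℤ)+1) * (n:ℤ) * ((n:ℤ)-1) =
        3 * (2 * ((∑ a ∈ Finset.Icc 1 (n-1), (n-a) * a : ℕ) : ℤ)) by linear_combination -hFz]
      exact Int.mul_ediv_cancel_left _ (by norm_num)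
    have hp : (2:ℤ)^(n+1) = 2*2^n := by ring
    rcases Nat.even_or_odd n with he | ho
    · obtain ⟨k, hk⟩ := he
      have hnk : (n:ℤ) = 2*(k:ℤ) := by
        rw [hk]; push_cast; ring
      have hneg : (-1:ℤ)^n = 1 := Even.neg_one_pow ⟨k, hk⟩
      have hPF := Cyc.card_PF_even (k := k) (n := n) (by omega) (by omega)
      have hPFz : ((Cyc.PF n).card : ℤ) =
          ((∑ a ∈ Finset.Icc 1 (n-1), (n-a) * a : ℕ) : ℤ) - (k:ℤ)^2 := by
        have h := congrArg (Nat.cast : ℕ → ℤ) hPF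
        rw [Nat.cast_add, Nat.cast_mul] at h
        linear_combination h
      have hd2 : (5 + (-1:ℤ)^n) * (n:ℤ)^2 / 4 = 6*(k:ℤ)^2 := by
        rw [hneg, show (5 + (1:ℤ)) * (n:ℤ)^2 = 4*(6*(k:ℤ)^2) by rw [hnk]; ring]
        exact Int.mul_ediv_cancel_left _ (by norm_num)
      rw [hd1, hd2]
      push_cast
      rw [hPT, hPFz]
      have hsq : (n:ℤ)^2 = 4*(k:ℤ)^2 := by rw [hnk]; ring
      linarith [hp, hsq]
    · have hneg : (-1:ℤ)^n = -1 := Odd.neg_one_pow ho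
      have hPF := Cyc.card_PF_odd ho
      have hPFz : ((Cyc.PF n).card : ℤ) =
          ((∑ a ∈ Finset.Icc 1 (n-1), (n-a) * a : ℕ) : ℤ) := by
        exact_mod_cast congrArg (Nat.cast : ℕ → ℤ) hPF
      have hd2 : (5 + (-1:ℤ)^n) * (n:ℤ)^2 / 4 = (n:ℤ)^2 := by
        rw [hneg, show (5 + (-1:ℤ)) * (n:ℤ)^2 = 4*(n:ℤ)^2 by ring]
        exact Int.mul_ediv_cancel_left _ (by norm_num)
      rw [hd1, hd2]
      push_cast
      rw [hPT, hPFz]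
      linarith [hp]
end
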